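/- arXiv:1802.09015 — 5 statements merged into one kernel-verified Lean document; each statement's English description precedes it below -/
import Mathlib

section
/- For all 1 ≤ k ≤ m ≤ n, every interval system I ∈ IS(n), every strictly increasing vector j = (j₁,…,j_m) ∈ [m:n] and every strictly increasing vector h = (h₁,…,h_k) ∈ [k:m], one has φ^m_k(φ^n_m(I, j), h) = φ^n_k(I, (j_{h₁},…,j_{h_k})). -/
/-!
The points `j₀ < j₁ < ⋯ < j_{m+1}` cut `ℤ` into left cells `(j_{a-1}, j_a]` and right cells
`[j_b, j_{b+1})`, and `[a,b] ∈ φ^n_m(I, j)` says that some `[A,B] ∈ I` has its left end in the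
`a`-th left cell and its right end in the `b`-th right cell. The `a`-th left cell of `j ∘ h` is the
union of the left cells of `j` whose indices lie in the `a`-th left cell of `h`, and likewise for
right cells. So a witness `[A,B]` for `φ^n_k(I, j ∘ h)` yields the witness `[A',B']` for the
composite, with `A'` and `B'` the indices of the cells of `j` containing `A` and `B`, and
conversely.
-/

open TopologicalSpace Filter Set MeasureTheory ProbabilityTheory
open scoped ENNReal symmDiff

noncomputable section

/-- The triangle `▲ = {(x,y) ∈ ℝ² : 0 ≤ x ≤ y ≤ 1}`. -/
def Tri : Set (ℝ × ℝ) := {p | 0 ≤ p.1 ∧ p.1 ≤ p.2 ∧ p.2 ≤ 1}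

/-- The diagonal `Δ = {(x,x) : x ∈ [0,1]}`. -/
def Diag : Set (ℝ × ℝ) := {p | ∃ x : ℝ, 0 ≤ x ∧ x ≤ 1 ∧ p = (x, x)}

/-- Membership in `IS(∞)`: compact subsets of the triangle containing the diagonal. -/
def MemISinf (K : Set (ℝ × ℝ)) : Prop := IsCompact K ∧ K ⊆ Tri ∧ Diag ⊆ K

/-- `IsIS n I`: `I` is an interval system on `[n] = {1,…,n}`: it contains `∅` and all
singletons `{j}`, `j ∈ [n]`, and every nonempty element is an interval `[a,b] ⊆ [n]`. -/
def IsIS (n : ℕ) (I : Set (Finset ℕ)) : Prop :=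
  (∅ : Finset ℕ) ∈ I ∧ (∀ j : ℕ, 1 ≤ j → j ≤ n → ({j} : Finset ℕ) ∈ I) ∧
    ∀ e ∈ I, e ≠ (∅ : Finset ℕ) → ∃ a b : ℕ, 1 ≤ a ∧ a ≤ b ∧ b ≤ n ∧ e = Finset.Icc a b

/-- Extension of a vector `(u₁,…,u_k)` by the conventions `u₀ := -1`, `u_{k+1} := 2`. -/
def uext (k : ℕ) (u : ℕ → ℝ) : ℕ → ℝ := fun i => if i = 0 then -1 else if i ≤ k then u i else 2

/-- The sampling map `φ^∞_k`: it contains `∅`, all singletons, and exactly those intervals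
`[a,b]`, `1 ≤ a < b ≤ k`, for which `K ∩ (u_{a-1},u_a) × (u_b,u_{b+1}) ≠ ∅`. -/
def phiInf (k : ℕ) (K : Set (ℝ × ℝ)) (u : ℕ → ℝ) : Set (Finset ℕ) :=
  {e | e = (∅ : Finset ℕ)} ∪ {e | ∃ j : ℕ, 1 ≤ j ∧ j ≤ k ∧ e = {j}} ∪
    {e | ∃ a b : ℕ, 1 ≤ a ∧ a < b ∧ b ≤ k ∧ e = Finset.Icc a b ∧
      ∃ p ∈ K, uext k u (a - 1) < p.1 ∧ p.1 < uext k u a ∧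
        uext k u b < p.2 ∧ p.2 < uext k u (b + 1)}

/-- Extension of `(j₁,…,j_k) ∈ [k:n]` by the conventions `j₀ := -n`, `j_{k+1} := 2n`. -/
def jext (n k : ℕ) (j : ℕ → ℕ) : ℕ → ℤ :=
  fun i => if i = 0 then -(n : ℤ) else if i ≤ k then (j i : ℤ) else 2 * n

/-- The finite sampling map `φ^n_k`: `[a,b] ∈ φ^n_k(I,j)` iff some `[A,B] ∈ I` satisfies
`j_{a-1} < A ≤ j_a ≤ j_b ≤ B < j_{b+1}`; together with `∅`. -/
def phiFin (n k : ℕ) (I : Set (Finset ℕ)) (j : ℕ → ℕ) : Set (Finset ℕ) :=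
  {e | e = (∅ : Finset ℕ)} ∪
    {e | ∃ a b : ℕ, 1 ≤ a ∧ a ≤ b ∧ b ≤ k ∧ e = Finset.Icc a b ∧
      ∃ A B : ℕ, A ≤ B ∧ Finset.Icc A B ∈ I ∧
        jext n k j (a - 1) < (A : ℤ) ∧ (A : ℤ) ≤ jext n k j a ∧
        jext n k j a ≤ jext n k j b ∧ jext n k j b ≤ (B : ℤ) ∧ (B : ℤ) < jext n k j (b + 1)}

/-- Removing the element `k` from the interval `[a,b]`: it becomes `[a-1,b-1]` if `k < a`,
`[a,b-1]` if `a ≤ k ≤ b`, and stays `[a,b]` if `b < k`. -/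
def eraseElem (k a b : ℕ) : Finset ℕ :=
  if b < k then Finset.Icc a b else if k < a then Finset.Icc (a - 1) (b - 1) else Finset.Icc a (b - 1)

/-- The one-step erasing map `φ^{n+1}_n(⬝, k)`, removing `k` from every interval. -/
def phiStep (I : Set (Finset ℕ)) (k : ℕ) : Set (Finset ℕ) :=
  {e | e = (∅ : Finset ℕ)} ∪
    {e | ∃ a b : ℕ, a ≤ b ∧ Finset.Icc a b ∈ I ∧ e = eraseElem k a b}

/-- The scaled interval system `n⁻¹I = {((a-1)/n, b/n) : ∅ ≠ [a,b] ∈ I} ∪ Δ ⊆ ▲`. -/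
def scaleIS (n : ℕ) (I : Set (Finset ℕ)) : Set (ℝ × ℝ) :=
  {p | ∃ a b : ℕ, 1 ≤ a ∧ a ≤ b ∧ Finset.Icc a b ∈ I ∧
        p = (((a : ℝ) - 1) / n, (b : ℝ) / n)} ∪ Diag

/-- `orderStat k u i` : the `i`-th smallest among `u 1, …, u k`  (for `1 ≤ i ≤ k`). -/
def orderStat (k : ℕ) (u : ℕ → ℝ) (i : ℕ) : ℝ :=
  (Multiset.sort (Multiset.map u (Finset.Icc 1 k).val) (· ≤ ·)).getD (i - 1) 0

/-- The ℓ¹-distance `d((x₁,y₁),(x₂,y₂)) = |x₁-x₂| + |y₁-y₂|` on `ℝ²`. -/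
def dist1 (p q : ℝ × ℝ) : ℝ := |p.1 - q.1| + |p.2 - q.2|

/-- The Hausdorff distance associated with the ℓ¹-distance on `ℝ²`. -/
def hd1 (K L : Set (ℝ × ℝ)) : ℝ :=
  max (sSup ((fun p => sInf (dist1 p '' L)) '' K))
      (sSup ((fun p => sInf (dist1 p '' K)) '' L))

/-- `enumOf s r` : the `r`-th smallest element of the finite set `s` (`1`-based). -/
def enumOf (s : Finset ℕ) (r : ℕ) : ℕ := (s.sort (· ≤ ·)).getD (r - 1) 0

section Sampling

variable {n m k : ℕ} {j h : ℕ → ℕ}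

lemma jext_zero : jext n k j 0 = -n := rfl

lemma jext_of_mem {i : ℕ} (hi : 1 ≤ i) (hik : i ≤ k) : jext n k j i = j i := by
  simp [jext, hik, Nat.one_le_iff_ne_zero.mp hi]

lemma jext_of_lt {i : ℕ} (hki : k < i) : jext n k j i = 2 * n := by
  simp [jext, show i ≠ 0 by omega, show ¬i ≤ k by omega]

lemma jext_comp (hh : ∀ i, 1 ≤ i → i ≤ k → 1 ≤ h i ∧ h i ≤ m) {i : ℕ} (hi : 1 ≤ i)
    (hik : i ≤ k) : jext n k (fun r => j (h r)) i = jext n m j (h i) := by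
  rw [jext_of_mem hi hik, jext_of_mem (hh i hi hik).1 (hh i hi hik).2]

lemma jext_monotone (hj : MonotoneOn j (Icc 1 k)) (hjn : ∀ i, 1 ≤ i → i ≤ k → j i ≤ n) :
    Monotone (jext n k j) := by
  intro x y hxy
  unfold jext
  split_ifs <;> first
    | omega
    | exact_mod_cast hj ⟨by omega, by omega⟩ ⟨by omega, by omega⟩ hxy
    | have := hjn x (by omega) (by omega); omega

lemma neg_le_jext (i : ℕ) : -(n : ℤ) ≤ jext n k j i := by
  unfold jext
  split_ifs <;> omega

lemma jext_le_two_mul (hjn : ∀ i, 1 ≤ i → i ≤ k → j i ≤ n) (i : ℕ) : jext n k j i ≤ 2 * n := by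
  unfold jext
  split_ifs with h0 hik
  · omega
  · have := hjn i (by omega) hik
    omega
  · rfl

def leftCell (n k : ℕ) (j : ℕ → ℕ) (a : ℕ) : Set ℤ := Ioc (jext n k j (a - 1)) (jext n k j a)

def rightCell (n k : ℕ) (j : ℕ → ℕ) (b : ℕ) : Set ℤ := Ico (jext n k j b) (jext n k j (b + 1))

lemma mem_phiFin_iff {I : Set (Finset ℕ)} {e : Finset ℕ} (hj : Monotone (jext n k j)) :
    e ∈ phiFin n k I j ↔ e = ∅ ∨ ∃ a b, 1 ≤ a ∧ a ≤ b ∧ b ≤ k ∧ e = Finset.Icc a b ∧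
      ∃ A B : ℕ, A ≤ B ∧ Finset.Icc A B ∈ I ∧ (A : ℤ) ∈ leftCell n k j a ∧
        (B : ℤ) ∈ rightCell n k j b := by
  simp only [phiFin, leftCell, rightCell, mem_union, mem_ofPred_eq, mem_Ioc, mem_Ico]
  refine or_congr_right (exists₂_congr fun a b => and_congr_right fun _ =>
    and_congr_right fun hab => ?_)
  simp only [hj hab, true_and, and_assoc]

lemma Icc_mem_phiFin_iff {I : Set (Finset ℕ)} {A' B' : ℕ} (hj : Monotone (jext n k j))
    (hAB' : A' ≤ B') :
    Finset.Icc A' B' ∈ phiFin n k I j ↔ 1 ≤ A' ∧ B' ≤ k ∧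
      ∃ A B : ℕ, A ≤ B ∧ Finset.Icc A B ∈ I ∧ (A : ℤ) ∈ leftCell n k j A' ∧
        (B : ℤ) ∈ rightCell n k j B' := by
  have hIcc : ∀ a b, Finset.Icc A' B' = Finset.Icc a b ↔ A' = a ∧ B' = b := fun a b => by
    rw [← Finset.coe_inj, Finset.coe_Icc, Finset.coe_Icc]
    exact Set.Icc_eq_Icc_iff hAB'
  rw [mem_phiFin_iff hj]
  simp only [hIcc, Finset.Icc_eq_empty_iff, hAB', not_true_eq_false, false_or]
  constructor
  · rintro ⟨a, b, ha, -, hb, ⟨rfl, rfl⟩, hwit⟩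
    exact ⟨ha, hb, hwit⟩
  · rintro ⟨ha, hb, hwit⟩
    exact ⟨A', B', ha, hAB', hb, ⟨rfl, rfl⟩, hwit⟩

lemma leftCell_comp (hj : Monotone (jext n m j)) (hh : ∀ i, 1 ≤ i → i ≤ k → 1 ≤ h i ∧ h i ≤ m)
    {a : ℕ} (ha : 1 ≤ a) (hak : a ≤ k) (x : ℤ) :
    (∃ A' : ℕ, 1 ≤ A' ∧ (A' : ℤ) ∈ leftCell m k h a ∧ x ∈ leftCell n m j A') ↔
      x ∈ leftCell n k (fun r => j (h r)) a := by
  have hprev : ∀ i : ℕ, jext m k h (a - 1) < i →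
      jext n k (fun r => j (h r)) (a - 1) ≤ jext n m j (i - 1) := by
    intro i hi
    rcases Nat.eq_zero_or_pos (a - 1) with h0 | h0
    · rw [h0, jext_zero]
      exact neg_le_jext _
    · rw [jext_of_mem h0 (by omega)] at hi
      rw [jext_comp hh h0 (by omega)]
      exact hj (by omega)
  simp only [leftCell, mem_Ioc, jext_comp hh ha hak]
  constructor
  · rintro ⟨A', -, ⟨hlo, hhi⟩, hxlo, hxhi⟩
    rw [jext_of_mem ha hak] at hhi
    exact ⟨(hprev A' hlo).trans_lt hxlo, hxhi.trans (hj (by exact_mod_cast hhi))⟩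
  · rintro ⟨hxlo, hxhi⟩
    have hex : ∃ i, x ≤ jext n m j i := ⟨h a, hxhi⟩
    have hA'1 : 1 ≤ Nat.find hex := by
      by_contra h0
      have hx := Nat.find_spec hex
      rw [show Nat.find hex = 0 by omega, jext_zero] at hx
      have := neg_le_jext (n := n) (k := k) (j := fun r => j (h r)) (a - 1)
      omega
    refine ⟨Nat.find hex, hA'1, ⟨?_, ?_⟩, not_le.mp (Nat.find_min hex (by omega)),
      Nat.find_spec hex⟩
    · rcases Nat.eq_zero_or_pos (a - 1) with h0 | h0
      · rw [h0, jext_zero]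
        omega
      · rw [jext_of_mem h0 (by omega)]
        by_contra! hle
        have := hj (show Nat.find hex ≤ h (a - 1) by exact_mod_cast hle)
        rw [jext_comp hh h0 (by omega)] at hxlo
        have := Nat.find_spec hex
        omega
    · rw [jext_of_mem ha hak]
      exact_mod_cast Nat.find_min' hex hxhi

lemma rightCell_comp (hj : Monotone (jext n m j)) (hjn : ∀ i, 1 ≤ i → i ≤ m → j i ≤ n)
    (hh : ∀ i, 1 ≤ i → i ≤ k → 1 ≤ h i ∧ h i ≤ m) {b : ℕ} (hb : 1 ≤ b) (hbk : b ≤ k) (y : ℤ) :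
    (∃ B' : ℕ, B' ≤ m ∧ (B' : ℤ) ∈ rightCell m k h b ∧ y ∈ rightCell n m j B') ↔
      y ∈ rightCell n k (fun r => j (h r)) b := by
  have hm : 1 ≤ m := (hh b hb hbk).1.trans (hh b hb hbk).2
  have hnext : ∀ i : ℕ, (i : ℤ) < jext m k h (b + 1) →
      jext n m j (i + 1) ≤ jext n k (fun r => j (h r)) (b + 1) := by
    intro i hi
    obtain hlt | rfl := hbk.lt_or_eq
    · rw [jext_of_mem (i := b + 1) (by omega) hlt] at hi
      rw [jext_comp (i := b + 1) hh (by omega) hlt]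
      exact hj (by omega)
    · rw [jext_of_lt (Nat.lt_succ_self b)]
      exact jext_le_two_mul hjn _
  simp only [rightCell, mem_Ico, jext_comp hh hb hbk]
  constructor
  · rintro ⟨B', -, ⟨hlo, hhi⟩, hylo, hyhi⟩
    rw [jext_of_mem hb hbk] at hlo
    exact ⟨(hj (by exact_mod_cast hlo)).trans hylo, hyhi.trans_le (hnext B' hhi)⟩
  · rintro ⟨hylo, hyhi⟩
    set B' := Nat.findGreatest (fun i => jext n m j i ≤ y) m
    have hB'm : B' ≤ m := Nat.findGreatest_le m
    have hB'y : jext n m j B' ≤ y :=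
      Nat.findGreatest_spec (P := fun i => jext n m j i ≤ y) (hh b hb hbk).2 hylo
    have hyB : y < jext n m j (B' + 1) := by
      obtain hlt | heq := hB'm.lt_or_eq
      · exact not_le.mp (Nat.findGreatest_is_greatest (Nat.lt_succ_self B') hlt)
      · rw [heq, jext_of_lt (Nat.lt_succ_self m)]
        exact hyhi.trans_le (jext_le_two_mul
          (fun i hi hik => hjn (h i) (hh i hi hik).1 (hh i hi hik).2) _)
    refine ⟨B', hB'm, ⟨?_, ?_⟩, hB'y, hyB⟩
    · rw [jext_of_mem hb hbk]
      exact_mod_cast Nat.le_findGreatest (hh b hb hbk).2 hylo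
    · obtain hlt | rfl := hbk.lt_or_eq
      · rw [jext_of_mem (i := b + 1) (by omega) hlt]
        by_contra! hle
        have := hj (show h (b + 1) ≤ B' by exact_mod_cast hle)
        rw [jext_comp (i := b + 1) hh (by omega) hlt] at hyhi
        omega
      · rw [jext_of_lt (Nat.lt_succ_self b)]
        omega

theorem phiFin_phiFin {I : Set (Finset ℕ)} (hj : MonotoneOn j (Icc 1 m))
    (hjn : ∀ i, 1 ≤ i → i ≤ m → j i ≤ n) (hh : MonotoneOn h (Icc 1 k))
    (hhm : ∀ i, 1 ≤ i → i ≤ k → 1 ≤ h i ∧ h i ≤ m) :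
    phiFin m k (phiFin n m I j) h = phiFin n k I (fun r => j (h r)) := by
  have hjext := jext_monotone hj hjn
  have hhext := jext_monotone hh fun i hi hik => (hhm i hi hik).2
  have hjhext : Monotone (jext n k (fun r => j (h r))) :=
    jext_monotone (hj.comp hh fun i hi => hhm i hi.1 hi.2)
      fun i hi hik => hjn (h i) (hhm i hi hik).1 (hhm i hi hik).2
  ext e
  rw [mem_phiFin_iff hhext, mem_phiFin_iff hjhext]
  refine or_congr_right (exists₂_congr fun a b => and_congr_right fun ha =>
    and_congr_right fun hab => and_congr_right fun hbk => and_congr_right fun _ => ?_)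
  have hleft := leftCell_comp hjext hhm ha (hab.trans hbk)
  have hright := rightCell_comp hjext hjn hhm (ha.trans hab) hbk
  constructor
  · rintro ⟨A', B', hAB', hmem, hA', hB'⟩
    obtain ⟨hA'1, hB'm, A, B, hAB, hI, hA, hB⟩ := (Icc_mem_phiFin_iff hjext hAB').1 hmem
    exact ⟨A, B, hAB, hI, (hleft A).1 ⟨A', hA'1, hA', hA⟩, (hright B).1 ⟨B', hB'm, hB', hB⟩⟩
  · rintro ⟨A, B, hAB, hI, hA, hB⟩
    obtain ⟨A', hA'1, hA', hA⟩ := (hleft A).2 hA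
    obtain ⟨B', hB'm, hB', hB⟩ := (hright B).2 hB
    have hAB' : A' ≤ B' := by exact_mod_cast hA'.2.trans ((hhext hab).trans hB'.1)
    exact ⟨A', B', hAB', (Icc_mem_phiFin_iff hjext hAB').2 ⟨hA'1, hB'm, A, B, hAB, hI, hA, hB⟩,
      hA', hB'⟩

end Sampling

theorem stmt1_general (n m k : ℕ) (I : Set (Finset ℕ))
    (j : ℕ → ℕ) (hjmono : StrictMonoOn j (Set.Icc 1 m))
    (hjval : ∀ i, 1 ≤ i → i ≤ m → 1 ≤ j i ∧ j i ≤ n)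
    (h : ℕ → ℕ) (hhmono : StrictMonoOn h (Set.Icc 1 k))
    (hhval : ∀ i, 1 ≤ i → i ≤ k → 1 ≤ h i ∧ h i ≤ m) :
    phiFin m k (phiFin n m I j) h = phiFin n k I (fun r => j (h r)) :=
  phiFin_phiFin hjmono.monotoneOn (fun i hi him => (hjval i hi him).2) hhmono.monotoneOn hhval

/-- For `1 ≤ k ≤ m ≤ n`, an interval system `I ∈ IS(n)` and strictly
increasing vectors `j ∈ [m:n]`, `h ∈ [k:m]`:
`φ^m_k(φ^n_m(I, j), h) = φ^n_k(I, (j_{h₁},…,j_{h_k}))`. -/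
theorem stmt1 (n m k : ℕ) (hk : 1 ≤ k) (hkm : k ≤ m) (hmn : m ≤ n)
    (I : Set (Finset ℕ)) (hI : IsIS n I)
    (j : ℕ → ℕ) (hjmono : StrictMonoOn j (Set.Icc 1 m))
    (hjval : ∀ i, 1 ≤ i → i ≤ m → 1 ≤ j i ∧ j i ≤ n)
    (h : ℕ → ℕ) (hhmono : StrictMonoOn h (Set.Icc 1 k))
    (hhval : ∀ i, 1 ≤ i → i ≤ k → 1 ≤ h i ∧ h i ≤ m) :
    phiFin m k (phiFin n m I j) h = phiFin n k I (fun r => j (h r)) :=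
  stmt1_general n m k I j hjmono hjval h hhmono hhval
end
end

section
/- Let n ∈ ℕ, I ∈ IS(n) and π a permutation of [n]. For 1 ≤ k ≤ n−1 set i_k := (π_{|k+1})⁻¹(k+1), where π_{|k} is the permutation of [k] obtained by deleting the entries k+1,…,n from the one-line notation of π. Define I_n := I and I_{k−1} := φ^k_{k−1}(I_k, i_{k−1}) for 2 ≤ k ≤ n, using the one-step erasing map. Then for every 1 ≤ k ≤ n: (b) I_k = φ^n_k(I, j^π_k), where j^π_k ∈ [k:n] is the increasing enumeration of the set π⁻¹([k]); and (c) I_k = (π_{|k})⁻¹( π(I)_{|k} ), where π(I) := {π(e) : e ∈ I} and H_{|k} := {e ∩ [k] : e ∈ H}. -/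
open TopologicalSpace Filter Set MeasureTheory ProbabilityTheory
open scoped ENNReal symmDiff

noncomputable section

/-- We regard the (discrete) space of hypergraphs/interval systems with its full σ-field. -/
instance instMSSetFinset : MeasurableSpace (Set (Finset ℕ)) := ⊤

/-- The Borel σ-field of the Hausdorff-metric topology on the nonempty compact subsets of `ℝ²`. -/
instance instMSNC : MeasurableSpace (NonemptyCompacts (ℝ × ℝ)) := borel _

instance instBSNC : BorelSpace (NonemptyCompacts (ℝ × ℝ)) := ⟨rfl⟩

/-- `U` is an iid sequence of uniform([0,1]) random variables (a `U`-process). -/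
def IsUniformIID {Ω : Type*} [MeasurableSpace Ω] (μ : Measure Ω) (U : ℕ → Ω → ℝ) : Prop :=
  (∀ i, Measurable (U i)) ∧ iIndepFun U μ ∧
    ∀ i, Measure.map (U i) μ = volume.restrict (Set.Icc (0 : ℝ) 1)

/-- `rankOf u n = #{i ∈ [n+1] : u i ≤ u (n+1)}`, the rank of `u (n+1)` among `u 1, …, u (n+1)`;
as a function of an iid uniform sequence `U`, this is the eraser process corresponding to `U`. -/
def rankOf (u : ℕ → ℝ) (n : ℕ) : ℕ :=
  ((Finset.Icc 1 (n + 1)).filter (fun i => u i ≤ u (n + 1))).card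

/-- The backward filtration `F_n = σ(I_m, η_m : m ≥ n)` generated by the process `(I, η)`. -/
def eipF {Ω : Type*} [MeasurableSpace Ω] (I : ℕ → Ω → Set (Finset ℕ)) (η : ℕ → Ω → ℕ)
    (n : ℕ) : MeasurableSpace Ω :=
  ⨆ m, ⨆ _ : n ≤ m, (MeasurableSpace.comap (I m) ⊤ ⊔ MeasurableSpace.comap (η m) ⊤)

/-- The tail (terminal) σ-field `F_∞ = ∩_n F_n` of the process `(I, η)`. -/
def eipTail {Ω : Type*} [MeasurableSpace Ω] (I : ℕ → Ω → Set (Finset ℕ))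
    (η : ℕ → Ω → ℕ) : MeasurableSpace Ω :=
  ⨅ n, eipF I η n

/-- `(I, η)` is an erased-interval process (EIP) with respect to `μ`:
`(I_n, η_n)` takes values in `IS(n) × [n+1]` a.s., `η_n` is uniform on `[n+1]` and independent
of `F_{n+1} = σ(I_m, η_m : m ≥ n+1)`, and `I_n = φ^{n+1}_n(I_{n+1}, η_n)` a.s. -/
structure IsEIP {Ω : Type*} [MeasurableSpace Ω] (μ : Measure Ω)
    (I : ℕ → Ω → Set (Finset ℕ)) (η : ℕ → Ω → ℕ) : Prop where
  measI : ∀ n, Measurable (I n)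
  measη : ∀ n, Measurable (η n)
  valI : ∀ n, 1 ≤ n → ∀ᵐ ω ∂μ, IsIS n (I n ω)
  valη : ∀ n, 1 ≤ n → ∀ᵐ ω ∂μ, η n ω ∈ Finset.Icc 1 (n + 1)
  unif : ∀ n, 1 ≤ n → ∀ k ∈ Finset.Icc 1 (n + 1), μ {ω | η n ω = k} = ((n : ℝ≥0∞) + 1)⁻¹
  indep : ∀ n, 1 ≤ n → Indep (MeasurableSpace.comap (η n) ⊤) (eipF I η (n + 1)) μ
  step : ∀ n, 1 ≤ n → ∀ᵐ ω ∂μ, I n ω = phiStep (I (n + 1) ω) (η n ω)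

/-- `U` is the `U`-process corresponding to the eraser process `η`. -/
def CorrespondsU {Ω : Type*} [MeasurableSpace Ω] (μ : Measure Ω)
    (η : ℕ → Ω → ℕ) (U : ℕ → Ω → ℝ) : Prop :=
  IsUniformIID μ U ∧ ∀ n, 1 ≤ n → ∀ᵐ ω ∂μ, η n ω = rankOf (fun i => U i ω) n

/-- Every `m₁`-measurable event agrees with some `m₂`-measurable event up to a `μ`-null set. -/
def NullSubset {Ω : Type*} [MeasurableSpace Ω] (μ : Measure Ω)
    (m₁ m₂ : MeasurableSpace Ω) : Prop :=
  ∀ A : Set Ω, MeasurableSet[m₁] A → ∃ B : Set Ω, MeasurableSet[m₂] B ∧ μ (symmDiff A B) = 0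

/-- Relabeling the edges of a hypergraph along a map of the vertices: `π(H) = {π(e) : e ∈ H}`. -/
def relabel (f : ℕ → ℕ) (H : Set (Finset ℕ)) : Set (Finset ℕ) :=
  {e | ∃ e' ∈ H, e = e'.image f}

/-- The restriction `H_{|k} = {e ∩ [k] : e ∈ H}` of a hypergraph. -/
def restrictH (k : ℕ) (H : Set (Finset ℕ)) : Set (Finset ℕ) :=
  {e | ∃ e' ∈ H, e = e' ∩ Finset.Icc 1 k}

/-- The permutations `S_n = b_n(η₁,…,η_{n-1})` built from a sequence of erasers:
`S_{n+1}` is obtained from `S_n` by inserting `n+1` in the `η_n`-th gap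
of the one-line notation of `S_n` (the permutation process corresponding to `η`). -/
def permOf (η : ℕ → ℕ) : ℕ → ℕ → ℕ
  | 0 => fun r => r
  | 1 => fun r => r
  | (n + 2) => fun r =>
      if r = η (n + 1) then n + 2
      else if r < η (n + 1) then permOf η (n + 1) r
      else permOf η (n + 1) (r - 1)

/-- `IsIH n H` : `H` is an interval hypergraph on `[n]`: it contains `∅` and all singletons,
every edge is a subset of `[n]`, and some relabeling of `H` (equivalently, some linear order
on `[n]`) turns `H` into an interval system. -/
def IsIH (n : ℕ) (H : Set (Finset ℕ)) : Prop :=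
  (∅ : Finset ℕ) ∈ H ∧ (∀ j : ℕ, 1 ≤ j → j ≤ n → ({j} : Finset ℕ) ∈ H) ∧
    (∀ e ∈ H, e ⊆ Finset.Icc 1 n) ∧
    ∃ f : ℕ → ℕ, Set.BijOn f (Set.Icc 1 n) (Set.Icc 1 n) ∧ IsIS n (relabel f H)

/-- The hypergraph `{{i ∈ [n] : x < u_i < y} : (x,y) ∈ K} ∪ {{j} : j ∈ [n]} ∪ {∅}`
on `[n]` sampled from a set `K ⊆ ▲` at positions `u`. -/
def sampledH (n : ℕ) (K : Set (ℝ × ℝ)) (u : ℕ → ℝ) : Set (Finset ℕ) :=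
  {e | e = (∅ : Finset ℕ)} ∪ {e | ∃ j : ℕ, 1 ≤ j ∧ j ≤ n ∧ e = {j}} ∪
    {e | ∃ p ∈ K, e = (Finset.Icc 1 n).filter (fun i => p.1 < u i ∧ u i < p.2)}

/-- `(H_n)` is an exchangeable interval hypergraph on `ℕ` with respect to `μ`. -/
structure IsEIH {Ω : Type*} [MeasurableSpace Ω] (μ : Measure Ω)
    (H : ℕ → Ω → Set (Finset ℕ)) : Prop where
  meas : ∀ n, Measurable (H n)
  val : ∀ n, 1 ≤ n → ∀ᵐ ω ∂μ, IsIH n (H n ω)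
  restr : ∀ n, 1 ≤ n → ∀ᵐ ω ∂μ, H n ω = restrictH n (H (n + 1) ω)
  exch : ∀ n, 1 ≤ n → ∀ f : ℕ → ℕ, Set.BijOn f (Set.Icc 1 n) (Set.Icc 1 n) →
    Measure.map (fun ω => relabel f (H n ω)) μ = Measure.map (H n) μ

/-- `i_k = (π_{|k+1})⁻¹(k+1)`: the rank of `π⁻¹(k+1)` inside `π⁻¹([k+1])`. -/
def ikOf (π : Equiv.Perm ℕ) (n k : ℕ) : ℕ :=
  ((Finset.Icc 1 n).filter (fun i => π i ≤ k + 1 ∧ i ≤ π.symm (k + 1))).card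

/-- `j^π_k` : the increasing enumeration of the set `π⁻¹([k]) ⊆ [n]`. -/
def jpi (π : Equiv.Perm ℕ) (n k : ℕ) : ℕ → ℕ :=
  fun r => enumOf ((Finset.Icc 1 n).filter (fun i => π i ≤ k)) r

/-- The inverse `(π_{|k})⁻¹` of the permutation of `[k]` obtained by deleting the entries
`k+1,…,n` from the one-line notation of `π`: `(π_{|k})⁻¹(v)` is the rank of `π⁻¹(v)`
inside `π⁻¹([k])`. -/
def restrPermInv (π : Equiv.Perm ℕ) (n k : ℕ) : ℕ → ℕ :=
  fun v => ((Finset.Icc 1 n).filter (fun i => π i ≤ k ∧ i ≤ π.symm v)).card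


/-!
Every `I_k` is `compress S_k I`, the trace of `I` on `S_k = π⁻¹([k])` relabelled increasingly
onto `[k]`: an edge `e` becomes the image of `e ∩ S_k` under the rank map
`rank = countLe S_k : x ↦ #{y ∈ S_k | y ≤ x}`, so an interval `[A,B]` becomes
`[rank (A-1) + 1, rank B]`. For `k = n` the rank map is the identity on `[n]`.
Since `S_k = S_{k+1} \ {π⁻¹(k+1)}` and `i_k` is the rank of `π⁻¹(k+1)` in `S_{k+1}`, one erasing
step removes exactly that rank, which gives the chain by downward induction. For (b), the
inequalities `j_{a-1} < A ≤ j_a` and `j_b ≤ B < j_{b+1}` say that `A - 1` and `B` have ranks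
`a - 1` and `b`; for (c), `(π_{|k})⁻¹ ∘ π` is the rank map of `S_k`.
-/

def countLe (s : Finset ℕ) (m : ℕ) : ℕ := (s.filter (· ≤ m)).card

section countLe

variable {s : Finset ℕ}

lemma countLe_mono (s : Finset ℕ) {m m' : ℕ} (h : m ≤ m') : countLe s m ≤ countLe s m' :=
  Finset.card_le_card (Finset.monotone_filter_right s fun _ _ hx => hx.trans h)

lemma countLe_le_card (s : Finset ℕ) (m : ℕ) : countLe s m ≤ s.card :=
  Finset.card_le_card (Finset.filter_subset _ _)

lemma countLe_lt_of_mem {x y : ℕ} (hx : x ∈ s) (hyx : y < x) : countLe s y < countLe s x := by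
  refine Finset.card_lt_card ((Finset.ssubset_iff_of_subset ?_).2 ⟨x, ?_, ?_⟩)
  · exact Finset.monotone_filter_right s fun _ _ hz => hz.trans hyx.le
  · exact Finset.mem_filter.2 ⟨hx, le_rfl⟩
  · exact fun h => (Finset.mem_filter.1 h).2.not_gt hyx

lemma le_iff_countLe_le {p x : ℕ} (hp : p ∈ s) : p ≤ x ↔ countLe s p ≤ countLe s x :=
  ⟨countLe_mono s, fun h => not_lt.1 fun hxp => (countLe_lt_of_mem hp hxp).not_ge h⟩

lemma enumOf_eq_orderEmbOfFin {r : ℕ} (h1 : 1 ≤ r) (h2 : r ≤ s.card) :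
    enumOf s r = s.orderEmbOfFin rfl ⟨r - 1, by omega⟩ := by
  rw [Finset.orderEmbOfFin_apply, enumOf, List.getD_eq_getElem _ _ (by simp; omega)]
  rfl

lemma countLe_orderEmbOfFin (i : Fin s.card) : countLe s (s.orderEmbOfFin rfl i) = i + 1 := by
  set f := s.orderEmbOfFin rfl
  calc countLe s (f i) = ((Finset.univ.map f.toEmbedding).filter (· ≤ f i)).card := by
        rw [s.map_orderEmbOfFin_univ rfl, countLe]
    _ = (Finset.Iic i).card := by
        simp only [Finset.filter_map, Finset.card_map, Function.comp_def,
          RelEmbedding.coe_toEmbedding, f.le_iff_le, Finset.filter_ge_eq_Iic]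
    _ = i + 1 := Fin.card_Iic i

lemma enumOf_mem {r : ℕ} (h1 : 1 ≤ r) (h2 : r ≤ s.card) : enumOf s r ∈ s := by
  rw [enumOf_eq_orderEmbOfFin h1 h2]
  exact Finset.orderEmbOfFin_mem _ _ _

lemma countLe_enumOf {r : ℕ} (h1 : 1 ≤ r) (h2 : r ≤ s.card) : countLe s (enumOf s r) = r := by
  rw [enumOf_eq_orderEmbOfFin h1 h2, countLe_orderEmbOfFin]
  exact Nat.sub_add_cancel h1

lemma enumOf_le_iff {r : ℕ} (h1 : 1 ≤ r) (h2 : r ≤ s.card) (m : ℕ) :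
    enumOf s r ≤ m ↔ r ≤ countLe s m := by
  rw [le_iff_countLe_le (enumOf_mem h1 h2), countLe_enumOf h1 h2]

end countLe

theorem Finset.Icc_eq_Icc_iff {α : Type*} [PartialOrder α] [LocallyFiniteOrder α] {a b c d : α}
    (h : a ≤ b) : Finset.Icc a b = Finset.Icc c d ↔ a = c ∧ b = d := by
  rw [← Finset.coe_inj, Finset.coe_Icc, Finset.coe_Icc, Set.Icc_eq_Icc_iff h]

lemma IsIS.bounds_of_Icc_mem {n : ℕ} {I : Set (Finset ℕ)} (hI : IsIS n I) {A B : ℕ}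
    (hAB : A ≤ B) (h : Finset.Icc A B ∈ I) : 1 ≤ A ∧ B ≤ n := by
  obtain ⟨a, b, ha, hab, hb, he⟩ := hI.2.2 _ h (Finset.nonempty_Icc.2 hAB).ne_empty
  obtain ⟨rfl, rfl⟩ := (Finset.Icc_eq_Icc_iff hAB).1 he
  exact ⟨ha, hb⟩

lemma IsIS.subset_Icc {n : ℕ} {I : Set (Finset ℕ)} (hI : IsIS n I) {e : Finset ℕ} (he : e ∈ I) :
    e ⊆ Finset.Icc 1 n := by
  by_cases h : e = ∅
  · exact h ▸ Finset.empty_subset _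
  obtain ⟨a, b, ha, -, hb, rfl⟩ := hI.2.2 e he h
  exact Finset.Icc_subset_Icc ha hb

lemma image_countLe_Icc_inter (s : Finset ℕ) {A : ℕ} (hA : 1 ≤ A) (B : ℕ) :
    (Finset.Icc A B ∩ s).image (countLe s) =
      Finset.Icc (countLe s (A - 1) + 1) (countLe s B) := by
  ext r
  simp only [Finset.mem_image, Finset.mem_inter, Finset.mem_Icc]
  constructor
  · rintro ⟨x, ⟨⟨hAx, hxB⟩, hx⟩, rfl⟩
    exact ⟨countLe_lt_of_mem hx (by omega), countLe_mono s hxB⟩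
  · rintro ⟨hr, hrB⟩
    have hrs : r ≤ s.card := hrB.trans (countLe_le_card s B)
    have hA' := (enumOf_le_iff (by omega) hrs (A - 1)).not.2 (by omega)
    exact ⟨enumOf s r, ⟨⟨by omega, (enumOf_le_iff (by omega) hrs B).2 hrB⟩,
      enumOf_mem (by omega) hrs⟩, countLe_enumOf (by omega) hrs⟩

def compress (s : Finset ℕ) (I : Set (Finset ℕ)) : Set (Finset ℕ) :=
  {e | ∃ e' ∈ I, e = (e' ∩ s).image (countLe s)}

lemma mem_compress_iff {n : ℕ} {I : Set (Finset ℕ)} (hI : IsIS n I) {s e : Finset ℕ} :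
    e ∈ compress s I ↔ e = ∅ ∨ ∃ A B : ℕ, A ≤ B ∧ Finset.Icc A B ∈ I ∧
      e = Finset.Icc (countLe s (A - 1) + 1) (countLe s B) := by
  constructor
  · rintro ⟨e', he', rfl⟩
    by_cases h : e' = ∅
    · simp [h]
    obtain ⟨A, B, hA, hAB, -, rfl⟩ := hI.2.2 e' he' h
    exact Or.inr ⟨A, B, hAB, he', image_countLe_Icc_inter s hA B⟩
  · rintro (rfl | ⟨A, B, hAB, hmem, rfl⟩)
    · exact ⟨∅, hI.1, by simp⟩
    · exact ⟨_, hmem, (image_countLe_Icc_inter s (hI.bounds_of_Icc_mem hAB hmem).1 B).symm⟩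

lemma countLe_Icc_one {n m : ℕ} (hm : m ≤ n) : countLe (Finset.Icc 1 n) m = m := by
  have : (Finset.Icc 1 n).filter (· ≤ m) = Finset.Icc 1 m := by
    ext x
    simp only [Finset.mem_filter, Finset.mem_Icc]
    omega
  rw [countLe, this, Nat.card_Icc, Nat.add_sub_cancel]

lemma compress_Icc_one {n : ℕ} {I : Set (Finset ℕ)} (hI : ∀ e ∈ I, e ⊆ Finset.Icc 1 n) :
    compress (Finset.Icc 1 n) I = I := by
  have hid : ∀ e ∈ I, (e ∩ Finset.Icc 1 n).image (countLe (Finset.Icc 1 n)) = e := by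
    intro e he
    rw [Finset.inter_eq_left.2 (hI e he), Finset.image_congr (g := id), Finset.image_id]
    exact fun x hx => countLe_Icc_one (Finset.mem_Icc.1 (hI e he hx)).2
  ext e
  exact ⟨fun ⟨e', he', h⟩ => h ▸ (hid e' he').symm ▸ he', fun he => ⟨e, he, (hid e he).symm⟩⟩

lemma countLe_erase {s : Finset ℕ} {p : ℕ} (hp : p ∈ s) (x : ℕ) :
    countLe (s.erase p) x = countLe s x - if p ≤ x then 1 else 0 := by
  rw [countLe, countLe, Finset.filter_erase]
  split_ifs with h
  · exact Finset.card_erase_of_mem (Finset.mem_filter.2 ⟨hp, h⟩)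
  · rw [Finset.erase_eq_of_notMem (s := s.filter (· ≤ x)) fun hm => h (Finset.mem_filter.1 hm).2,
      Nat.sub_zero]

lemma eraseElem_countLe {s : Finset ℕ} {p x y : ℕ} (hp : p ∈ s)
    (hxy : countLe s x < countLe s y) :
    eraseElem (countLe s p) (countLe s x + 1) (countLe s y) =
      Finset.Icc (countLe (s.erase p) x + 1) (countLe (s.erase p) y) := by
  have hx := countLe_erase hp x
  have hy := countLe_erase hp y
  have hp1 : 1 ≤ countLe s p := Finset.card_pos.2 ⟨p, Finset.mem_filter.2 ⟨hp, le_rfl⟩⟩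
  simp only [le_iff_countLe_le hp] at hx hy
  unfold eraseElem
  split_ifs at hx hy ⊢ <;> congr 1 <;> omega

lemma phiStep_compress {n : ℕ} {I : Set (Finset ℕ)} (hI : IsIS n I) {s : Finset ℕ} {p : ℕ}
    (hp : p ∈ s) : phiStep (compress s I) (countLe s p) = compress (s.erase p) I := by
  ext e
  simp only [phiStep, Set.mem_union, Set.mem_ofPred_eq, mem_compress_iff hI]
  constructor
  · rintro (rfl | ⟨a, b, hab, hE | ⟨A, B, hAB, hmem, hE⟩, rfl⟩)
    · exact Or.inl rfl
    · exact absurd hE (Finset.nonempty_Icc.2 hab).ne_empty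
    · obtain ⟨rfl, rfl⟩ := (Finset.Icc_eq_Icc_iff hab).1 hE
      exact Or.inr ⟨A, B, hAB, hmem, eraseElem_countLe hp (by omega)⟩
  · rintro (rfl | ⟨A, B, hAB, hmem, rfl⟩)
    · exact Or.inl rfl
    by_cases hne : countLe s (A - 1) < countLe s B
    · exact Or.inr ⟨_, _, hne, Or.inr ⟨A, B, hAB, hmem, rfl⟩, (eraseElem_countLe hp hne).symm⟩
    · refine Or.inl (Finset.Icc_eq_empty ?_)
      have hx := countLe_erase hp (A - 1)
      have hy := countLe_erase hp B
      have := countLe_mono (s.erase p) (show A - 1 ≤ B by omega)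
      split_ifs at hx hy <;> omega

lemma jext_enumOf_le_iff (n : ℕ) {k : ℕ} {s : Finset ℕ} (hs : s.card = k) (i m : ℕ)
    (hi : i ≤ k + 1) (hm : m < 2 * n) : jext n k (enumOf s) i ≤ m ↔ i ≤ countLe s m := by
  have hcard := countLe_le_card s m
  unfold jext
  split_ifs with h0 hik
  · constructor <;> intro <;> omega
  · exact_mod_cast enumOf_le_iff (by omega) (hs ▸ hik) m
  · constructor <;> intro <;> omega

lemma jext_enumOf_bounds_iff {n k : ℕ} {s : Finset ℕ} (hs : s.card = k) {a b A B : ℕ}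
    (ha : 1 ≤ a) (hab : a ≤ b) (hbk : b ≤ k) (hA : 1 ≤ A) (hAB : A ≤ B) (hB : B ≤ n) :
    let j := jext n k (enumOf s)
    (j (a - 1) < A ∧ A ≤ j a ∧ j a ≤ j b ∧ j b ≤ B ∧ B < j (b + 1)) ↔
      countLe s (A - 1) + 1 = a ∧ countLe s B = b := by
  intro j
  have le_iff (i m : ℕ) (hi : i ≤ k + 1) (hm : m ≤ n) : j i ≤ m ↔ i ≤ countLe s m :=
    jext_enumOf_le_iff n hs i m hi (by omega)
  constructor
  · rintro ⟨h₁, h₂, -, h₃, h₄⟩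
    have := (le_iff (a - 1) (A - 1) (by omega) (by omega)).1 (by omega)
    have := (le_iff a (A - 1) (by omega) (by omega)).not.1 (by omega)
    have := (le_iff b B (by omega) hB).1 h₃
    have := (le_iff (b + 1) B (by omega) hB).not.1 (by omega)
    omega
  · rintro ⟨rfl, rfl⟩
    have hbs : countLe s B ≤ s.card := countLe_le_card s B
    have hjb : j (countLe s B) = enumOf s (countLe s B) := by
      simp only [j, jext]
      rw [if_neg (by omega), if_pos hbk]
    have hjbB := (enumOf_le_iff (by omega) hbs B).2 le_rfl
    refine ⟨?_, ?_, ?_, (le_iff _ B (by omega) hB).2 le_rfl, ?_⟩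
    · have := (le_iff (countLe s (A - 1)) (A - 1) (by omega) (by omega)).2 le_rfl
      rw [Nat.add_sub_cancel]
      omega
    · have := (le_iff (countLe s (A - 1) + 1) (A - 1) (by omega) (by omega)).not.2 (by omega)
      omega
    · rw [hjb]
      exact (le_iff _ _ (by omega) (by omega)).2 ((countLe_enumOf (by omega) hbs).symm ▸ hab)
    · have := (le_iff (countLe s B + 1) B (by omega) hB).not.2 (by omega)
      omega

lemma phiFin_enumOf {n k : ℕ} {I : Set (Finset ℕ)} (hI : IsIS n I) {s : Finset ℕ}
    (hs : s.card = k) : phiFin n k I (enumOf s) = compress s I := by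
  ext e
  simp only [phiFin, Set.mem_union, Set.mem_ofPred_eq, mem_compress_iff hI]
  constructor
  · rintro (rfl | ⟨a, b, ha, hab, hbk, rfl, A, B, hAB, hmem, hbounds⟩)
    · exact Or.inl rfl
    obtain ⟨hA, hB⟩ := hI.bounds_of_Icc_mem hAB hmem
    obtain ⟨rfl, rfl⟩ := (jext_enumOf_bounds_iff hs ha hab hbk hA hAB hB).1 hbounds
    exact Or.inr ⟨A, B, hAB, hmem, rfl⟩
  · rintro (rfl | ⟨A, B, hAB, hmem, rfl⟩)
    · exact Or.inl rfl
    obtain ⟨hA, hB⟩ := hI.bounds_of_Icc_mem hAB hmem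
    by_cases hne : countLe s (A - 1) < countLe s B
    · have hbk : countLe s B ≤ k := hs ▸ countLe_le_card s B
      exact Or.inr ⟨_, _, by omega, hne, hbk, rfl, A, B, hAB, hmem,
        (jext_enumOf_bounds_iff hs (by omega) hne hbk hA hAB hB).2 ⟨rfl, rfl⟩⟩
    · exact Or.inl (Finset.Icc_eq_empty (by omega))

theorem Equiv.Perm.apply_mem_iff_of_forall_notMem {α : Type*} {π : Equiv.Perm α} {t : Set α}
    (hπ : ∀ i, i ∉ t → π i = i) (i : α) : π i ∈ t ↔ i ∈ t := by
  constructor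
  · intro h
    by_contra hi
    exact hi (hπ i hi ▸ h)
  · intro hi
    by_contra h
    exact h ((π.injective (hπ _ h)).symm ▸ hi)

def permPreIic (π : Equiv.Perm ℕ) (n k : ℕ) : Finset ℕ :=
  (Finset.Icc 1 n).filter (fun i => π i ≤ k)

section permPreIic

variable {π : Equiv.Perm ℕ} {n : ℕ}

lemma permPreIic_eq_map (hπ : ∀ i, i ∉ Set.Icc 1 n → π i = i) {k : ℕ} (hk : k ≤ n) :
    permPreIic π n k = (Finset.Icc 1 k).map π.symm.toEmbedding := by
  ext i
  have := π.apply_mem_iff_of_forall_notMem hπ i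
  simp only [permPreIic, Finset.mem_filter, Finset.mem_map_equiv, Equiv.symm_symm,
    Finset.mem_Icc, Set.mem_Icc] at this ⊢
  omega

lemma card_permPreIic (hπ : ∀ i, i ∉ Set.Icc 1 n → π i = i) {k : ℕ} (hk : k ≤ n) :
    (permPreIic π n k).card = k := by
  rw [permPreIic_eq_map hπ hk, Finset.card_map, Nat.card_Icc, Nat.add_sub_cancel]

lemma image_permPreIic (hπ : ∀ i, i ∉ Set.Icc 1 n → π i = i) {k : ℕ} (hk : k ≤ n) :
    (permPreIic π n k).image π = Finset.Icc 1 k := by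
  rw [permPreIic_eq_map hπ hk, Finset.map_eq_image, Finset.image_image]
  simp

lemma permPreIic_self (hπ : ∀ i, i ∉ Set.Icc 1 n → π i = i) :
    permPreIic π n n = Finset.Icc 1 n := by
  ext i
  have := π.apply_mem_iff_of_forall_notMem hπ i
  simp only [permPreIic, Finset.mem_filter, Finset.mem_Icc, Set.mem_Icc] at this ⊢
  omega

lemma permPreIic_erase (k : ℕ) :
    permPreIic π n k = (permPreIic π n (k + 1)).erase (π.symm (k + 1)) := by
  ext i
  simp only [permPreIic, Finset.mem_erase, Finset.mem_filter, ne_eq, Equiv.eq_symm_apply,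
    Finset.mem_Icc]
  omega

lemma restrPermInv_apply (k i : ℕ) : restrPermInv π n k (π i) = countLe (permPreIic π n k) i := by
  rw [restrPermInv, countLe, permPreIic, Finset.filter_filter, Equiv.symm_apply_apply]

lemma ikOf_eq_countLe (k : ℕ) : ikOf π n k = countLe (permPreIic π n (k + 1)) (π.symm (k + 1)) := by
  rw [← restrPermInv_apply, Equiv.apply_symm_apply]
  rfl

end permPreIic

lemma phiStep_compress_permPreIic {π : Equiv.Perm ℕ} {n : ℕ}
    (hπ : ∀ i, i ∉ Set.Icc 1 n → π i = i) {I : Set (Finset ℕ)} (hI : IsIS n I) {k : ℕ}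
    (hk : k + 1 ≤ n) :
    phiStep (compress (permPreIic π n (k + 1)) I) (ikOf π n k) =
      compress (permPreIic π n k) I := by
  have hmem : π.symm (k + 1) ∈ permPreIic π n (k + 1) := by
    rw [permPreIic_eq_map hπ hk, Finset.mem_map_equiv, Equiv.symm_symm, Equiv.apply_symm_apply]
    exact Finset.right_mem_Icc.2 (Nat.le_add_left 1 k)
  rw [ikOf_eq_countLe, phiStep_compress hI hmem, permPreIic_erase k]

lemma relabel_restrictH_relabel {π : Equiv.Perm ℕ} {n k : ℕ}
    (hπ : ∀ i, i ∉ Set.Icc 1 n → π i = i) (hk : k ≤ n) (I : Set (Finset ℕ)) :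
    relabel (restrPermInv π n k) (restrictH k (relabel π I)) = compress (permPreIic π n k) I := by
  have key (e : Finset ℕ) : (e.image π ∩ Finset.Icc 1 k).image (restrPermInv π n k) =
      (e ∩ permPreIic π n k).image (countLe (permPreIic π n k)) := by
    rw [← image_permPreIic hπ hk, ← Finset.image_inter _ _ π.injective, Finset.image_image]
    exact Finset.image_congr fun i _ => restrPermInv_apply k i
  ext e
  simp only [relabel, restrictH, compress, Set.mem_ofPred_eq]
  constructor
  · rintro ⟨_, ⟨_, ⟨e', he', rfl⟩, rfl⟩, rfl⟩
    exact ⟨e', he', key e'⟩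
  · rintro ⟨e', he', rfl⟩
    exact ⟨_, ⟨_, ⟨e', he', rfl⟩, rfl⟩, (key e').symm⟩

theorem stmt2_general (n : ℕ) (I : Set (Finset ℕ)) (hI : IsIS n I)
    (π : Equiv.Perm ℕ) (hπ : ∀ i, i ∉ Set.Icc 1 n → π i = i)
    (C : ℕ → Set (Finset ℕ)) (hCn : C n = I)
    (hCstep : ∀ k, 2 ≤ k → k ≤ n → C (k - 1) = phiStep (C k) (ikOf π n (k - 1))) :
    ∀ k, 1 ≤ k → k ≤ n →
      C k = phiFin n k I (jpi π n k) ∧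
      C k = relabel (restrPermInv π n k) (restrictH k (relabel (⇑π) I)) := by
  have hC : ∀ k, 1 ≤ k → k ≤ n → C k = compress (permPreIic π n k) I := by
    intro k hk hkn
    induction hkn using Nat.decreasingInduction with
    | self => rw [hCn, permPreIic_self hπ, compress_Icc_one fun _ => hI.subset_Icc]
    | of_succ k hkn ih =>
      have hstep := hCstep (k + 1) (by omega) hkn
      rw [Nat.add_sub_cancel] at hstep
      rw [hstep, ih (by omega), phiStep_compress_permPreIic hπ hI hkn]
  intro k hk hkn
  rw [hC k hk hkn]
  exact ⟨(phiFin_enumOf hI (card_permPreIic hπ hkn)).symm,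
    (relabel_restrictH_relabel hπ hkn I).symm⟩

/-- Let `I ∈ IS(n)`, let `π` be a permutation of `[n]` and define the chain
`I_n := I`, `I_{k-1} := φ^k_{k-1}(I_k, i_{k-1})` with `i_k = (π_{|k+1})⁻¹(k+1)`. Then for all
`1 ≤ k ≤ n`: (b) `I_k = φ^n_k(I, j^π_k)` where `j^π_k` enumerates `π⁻¹([k])` increasingly, and
(c) `I_k = (π_{|k})⁻¹(π(I)_{|k})`. -/
theorem stmt2 (n : ℕ) (hn : 1 ≤ n) (I : Set (Finset ℕ)) (hI : IsIS n I)
    (π : Equiv.Perm ℕ) (hπ : ∀ i, i ∉ Set.Icc 1 n → π i = i)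
    (C : ℕ → Set (Finset ℕ)) (hCn : C n = I)
    (hCstep : ∀ k, 2 ≤ k → k ≤ n → C (k - 1) = phiStep (C k) (ikOf π n (k - 1))) :
    ∀ k, 1 ≤ k → k ≤ n →
      C k = phiFin n k I (jpi π n k) ∧
      C k = relabel (restrPermInv π n k) (restrictH k (relabel (⇑π) I)) :=
  stmt2_general n I hI π hπ C hCn hCstep
end
end

section
/- For every k ∈ ℕ, the map φ^∞_k : IS(∞) × [0,1]^k_< → IS(k) is Borel measurable, where IS(∞) carries the topology of the Hausdorff metric, [0,1]^k_< := {(u₁,…,u_k) : 0 ≤ u₁ < … < u_k ≤ 1} carries the Euclidean topology, and the finite set IS(k) is discrete. -/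
open TopologicalSpace Filter Set MeasureTheory ProbabilityTheory
open scoped ENNReal symmDiff

noncomputable section

/-! Each of the finitely many membership questions "`[a,b] ∈ φ^∞_k(K,u)`" is an open
condition on `(K,u)`: a point of `K` strictly inside the box `(u_{a-1},u_a) × (u_b,u_{b+1})`
survives small moves of the box and Hausdorff-small moves of `K`. Hence `φ^∞_k` factors through
a measurable map into a finite set of membership patterns. -/

lemma isOpen_setOf_exists_mem_nonemptyCompacts {α X : Type*} [MetricSpace α]
    [TopologicalSpace X] {W : Set (X × α)} (hW : IsOpen W) :
    IsOpen {x : NonemptyCompacts α × X | ∃ p ∈ (x.1 : Set α), (x.2, p) ∈ W} := by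
  refine isOpen_iff_mem_nhds.2 ?_
  rintro ⟨K, u⟩ ⟨p, hpK, hpW⟩
  obtain ⟨U, hU, V, hV, hUV⟩ := mem_nhds_prod_iff.1 (hW.mem_nhds hpW)
  obtain ⟨ε, hε, hballV⟩ := Metric.mem_nhds_iff.1 hV
  filter_upwards [prod_mem_nhds (Metric.ball_mem_nhds K hε) hU] with ⟨K', u'⟩ ⟨hK', hu'⟩
  rw [Metric.mem_ball, Metric.NonemptyCompacts.dist_eq] at hK'
  obtain ⟨q, hqK', hpq⟩ := Metric.exists_dist_lt_of_hausdorffDist_lt' hpK hK'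
    (Metric.hausdorffEDist_ne_top_of_nonempty_of_bounded K'.nonempty K.nonempty
      K'.isCompact.isBounded K.isCompact.isBounded)
  exact ⟨q, hqK', hUV ⟨hu', hballV (Metric.mem_ball.2 hpq)⟩⟩

lemma continuous_uext (k i : ℕ) : Continuous fun u : ℕ → ℝ => uext k u i := by
  unfold uext
  split_ifs
  · exact continuous_const
  · exact continuous_apply i
  · exact continuous_const

def uextBox (k a b : ℕ) : Set ((ℕ → ℝ) × (ℝ × ℝ)) :=
  {x | uext k x.1 (a - 1) < x.2.1 ∧ x.2.1 < uext k x.1 a ∧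
    uext k x.1 b < x.2.2 ∧ x.2.2 < uext k x.1 (b + 1)}

lemma isOpen_uextBox (k a b : ℕ) : IsOpen (uextBox k a b) := by
  have hc (i : ℕ) : Continuous fun x : (ℕ → ℝ) × (ℝ × ℝ) => uext k x.1 i :=
    (continuous_uext k i).comp continuous_fst
  exact (isOpen_lt (hc _) (continuous_fst.comp continuous_snd)).inter <|
    (isOpen_lt (continuous_fst.comp continuous_snd) (hc _)).inter <|
    (isOpen_lt (hc _) (continuous_snd.comp continuous_snd)).inter <|
    isOpen_lt (continuous_snd.comp continuous_snd) (hc _)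

def intervalsOfPattern (k : ℕ) (S : Fin (k + 1) × Fin (k + 1) → Prop) : Set (Finset ℕ) :=
  {e | e = (∅ : Finset ℕ)} ∪ {e | ∃ j : ℕ, 1 ≤ j ∧ j ≤ k ∧ e = {j}} ∪
    {e | ∃ q : Fin (k + 1) × Fin (k + 1), S q ∧ 1 ≤ (q.1 : ℕ) ∧ (q.1 : ℕ) < q.2 ∧
      (q.2 : ℕ) ≤ k ∧ e = Finset.Icc (q.1 : ℕ) q.2}

def boxPattern (k : ℕ) (x : NonemptyCompacts (ℝ × ℝ) × (ℕ → ℝ)) :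
    Fin (k + 1) × Fin (k + 1) → Prop :=
  fun q => ∃ p ∈ (x.1 : Set (ℝ × ℝ)), (x.2, p) ∈ uextBox k q.1 q.2

lemma measurable_boxPattern (k : ℕ) : Measurable (boxPattern k) :=
  measurable_pi_iff.2 fun q => measurableSet_setOfPred.1
    (isOpen_setOf_exists_mem_nonemptyCompacts (isOpen_uextBox k q.1 q.2)).measurableSet

lemma phiInf_eq_intervalsOfPattern (k : ℕ) (K : NonemptyCompacts (ℝ × ℝ)) (u : ℕ → ℝ) :
    phiInf k (K : Set (ℝ × ℝ)) u = intervalsOfPattern k (boxPattern k (K, u)) := by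
  unfold phiInf intervalsOfPattern
  congr 1
  ext e
  constructor
  · rintro ⟨a, b, ha, hab, hb, he, hp⟩
    exact ⟨(⟨a, by omega⟩, ⟨b, by omega⟩), hp, ha, hab, hb, he⟩
  · rintro ⟨q, hp, ha, hab, hb, he⟩
    exact ⟨q.1, q.2, ha, hab, hb, he, hp⟩

/-- For every `k`, the sampling map `φ^∞_k : IS(∞) × [0,1]^k_< → IS(k)` is
Borel measurable, where `IS(∞)` carries the (Borel σ-field of the) Hausdorff metric topology,
`[0,1]^k_<` its natural (subspace) Borel structure, and the finite set `IS(k)` is discrete. -/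
theorem stmt5 (k : ℕ) :
    Measurable (fun p : {K : NonemptyCompacts (ℝ × ℝ) // MemISinf (K : Set (ℝ × ℝ))} ×
        {u : ℕ → ℝ // (∀ i, 1 ≤ i → i ≤ k → u i ∈ Set.Icc (0 : ℝ) 1) ∧
          StrictMonoOn u (Set.Icc 1 k)} =>
      phiInf k (p.1.1 : Set (ℝ × ℝ)) p.2.1) := by
  simp_rw [phiInf_eq_intervalsOfPattern]
  exact (measurable_of_countable (intervalsOfPattern k)).comp <| (measurable_boxPattern k).comp <|
    (measurable_subtype_coe.comp measurable_fst).prodMk (measurable_subtype_coe.comp measurable_snd)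
end
end

section
/- Let (U_i)_{i∈ℕ} be iid uniform on [0,1] and let (K_n)_{n∈ℕ} ⊆ IS(∞) converge to K ∈ IS(∞) in the Hausdorff metric. Then for every k ∈ ℕ, almost surely φ^∞_k(K_n, U_{1:k},…,U_{k:k}) = φ^∞_k(K, U_{1:k},…,U_{k:k}) for all sufficiently large n (i.e. the sequence converges a.s. in the discrete space IS(k)). -/
open TopologicalSpace Filter Set MeasureTheory ProbabilityTheory
open scoped ENNReal symmDiff

noncomputable section

/-!
If `L` meets the open sampling box `(u_{a-1}, u_a) × (u_b, u_{b+1})`, then so does every `K_m`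
close to `L` in the Hausdorff distance; if `L` misses the closed box, then the closed box, being
compact, has positive distance from `L`, and `K_m` misses the open box for large `m`. So the
sampled interval systems can only fail to stabilize when a point of `L` lies on the boundary of a
sampling box that `L` misses. A boundary point inside an edge has, on the axis of that edge, a
coordinate isolated on one side in the projection of `L` cut to a rational strip: such
coordinates form a countable set. The corners with a fixed rational opposite corner form, in each
quadrant and after a reflection, a weak antichain, which is Lebesgue-null. The coordinates of the
box sides are distinct uniforms `U_i`, which almost surely avoid these countable and null sets.
-/

theorem IsWeakAntichain.volume_eq_zero {ι : Type*} [Fintype ι] [Nonempty ι]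
    {s : Set (ι → ℝ)} (hs : IsWeakAntichain s) : volume s = 0 := by
  -- a weak antichain lies in the frontier of its lower closure
  refine measure_mono_null (fun x hx => ?_) (lowerClosure s).lower.null_frontier
  refine ⟨subset_closure (subset_lowerClosure hx), fun hint => ?_⟩
  obtain ⟨ε, hε, hball⟩ := Metric.isOpen_iff.1 isOpen_interior x hint
  have hy : (fun i => x i + ε / 2) ∈ Metric.ball x ε := by
    rw [Metric.mem_ball, dist_pi_lt_iff hε]
    intro i
    rw [Real.dist_eq, add_sub_cancel_left, abs_of_pos (half_pos hε)]
    exact half_lt_self hε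
  obtain ⟨z, hz, hyz⟩ := interior_subset (hball hy)
  have hxz : ∀ i, x i < z i := fun i => (lt_add_of_pos_right _ (half_pos hε)).trans_le (hyz i)
  obtain ⟨i⟩ := ‹Nonempty ι›
  exact hs hx hz (fun h => (hxz i).ne (congrFun h i)) hxz

theorem volume_eq_zero_of_forall_not_lt_lt {N : Set (ℝ × ℝ)}
    (h : ∀ p ∈ N, ∀ r ∈ N, ¬(p.1 < r.1 ∧ p.2 < r.2)) : volume N = 0 := by
  rw [← (volume_preserving_finTwoArrow ℝ).measure_preimage_equiv]
  exact IsWeakAntichain.volume_eq_zero fun x hx y hy _ hxy => h _ hx _ hy ⟨hxy 0, hxy 1⟩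

theorem volume_eq_zero_of_forall_not_lt_gt {N : Set (ℝ × ℝ)}
    (h : ∀ p ∈ N, ∀ r ∈ N, ¬(p.1 < r.1 ∧ r.2 < p.2)) : volume N = 0 := by
  let T : ℝ × ℝ ≃ᵐ ℝ × ℝ := (MeasurableEquiv.refl ℝ).prodCongr (MeasurableEquiv.neg ℝ)
  have hT : MeasurePreserving T volume volume := by
    rw [Measure.volume_eq_prod]
    exact (MeasurePreserving.id volume).prod (Measure.measurePreserving_neg volume)
  rw [← hT.measure_preimage_equiv]
  refine volume_eq_zero_of_forall_not_lt_lt fun p hp r hr hpr => h _ hp _ hr ?_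
  exact ⟨hpr.1, neg_lt_neg hpr.2⟩

theorem countable_setOf_uIoo_gap {α : Type*} [LinearOrder α] [TopologicalSpace α]
    [OrderTopology α] [SecondCountableTopology α] (A : Set α) :
    {x ∈ A | ∃ y ≠ x, A ∩ uIoo x y = ∅}.Countable := by
  refine (countable_setOfPred_isolated_right_within (s := A)).union
    (countable_setOfPred_isolated_left_within (s := A)) |>.mono ?_
  rintro x ⟨hxA, y, hyx, hgap⟩
  rcases hyx.lt_or_gt with hyx | hxy
  · rw [uIoo_of_gt hyx] at hgap
    refine Or.inr ⟨hxA, empty_mem_iff_bot.1 (mem_nhdsWithin.2 ⟨Ioi y, isOpen_Ioi, hyx, ?_⟩)⟩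
    rintro c ⟨hyc, hcA, hcx⟩
    exact hgap.subset ⟨hcA, hyc, hcx⟩
  · rw [uIoo_of_lt hxy] at hgap
    refine Or.inl ⟨hxA, empty_mem_iff_bot.1 (mem_nhdsWithin.2 ⟨Iio y, isOpen_Iio, hxy, ?_⟩)⟩
    rintro c ⟨hcy, hcA, hxc⟩
    exact hgap.subset ⟨hcA, hxc, hcy⟩

lemma uIoo_subset_uIoo_of_mem {α : Type*} [LinearOrder α] {x y z : α} (hz : z ∈ uIoo x y) :
    uIoo x z ⊆ uIoo x y :=
  Ioo_subset_Ioo (le_inf inf_le_left hz.1.le) (sup_le le_sup_left hz.2.le)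

lemma exists_ne_uIoo_eq_Ioo {α : Type*} [LinearOrder α] {x s t : α} (hst : s < t)
    (hx : x = s ∨ x = t) :
    ∃ y ≠ x, uIoo x y = Ioo s t := by
  rcases hx with rfl | rfl
  · exact ⟨t, hst.ne', uIoo_of_lt hst⟩
  · exact ⟨s, hst.ne, uIoo_of_gt hst⟩

def MeetsBox (S : Set (ℝ × ℝ)) (s t v w : ℝ) : Prop :=
  ∃ p ∈ S, s < p.1 ∧ p.1 < t ∧ v < p.2 ∧ p.2 < w

def MeetsClosedBox (S : Set (ℝ × ℝ)) (s t v w : ℝ) : Prop :=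
  ∃ p ∈ S, s ≤ p.1 ∧ p.1 ≤ t ∧ v ≤ p.2 ∧ p.2 ≤ w

/-- `uIoo p.1 a ×ˢ uIoo p.2 b` is the open box with opposite corners `p` and `(a, b)`. -/
def boxCornersAt (L : Set (ℝ × ℝ)) (a b : ℝ) : Set (ℝ × ℝ) :=
  {p ∈ L | a ≠ p.1 ∧ b ≠ p.2 ∧ ∀ r ∈ L, ¬(r.1 ∈ uIoo p.1 a ∧ r.2 ∈ uIoo p.2 b)}

def boxCorners (L : Set (ℝ × ℝ)) : Set (ℝ × ℝ) :=
  ⋃ (a : ℝ) (b : ℝ), boxCornersAt L a b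

def boxEdgeAbscissae (L : Set (ℝ × ℝ)) : Set ℝ :=
  {x | ∃ p ∈ L, p.1 = x ∧ ∃ a ≠ x, ∃ v w, v < p.2 ∧ p.2 < w ∧
    ∀ r ∈ L, ¬(r.1 ∈ uIoo x a ∧ v < r.2 ∧ r.2 < w)}

/- In each open quadrant around `(a, b)`, no point of `boxCornersAt L a b` lies strictly
north-east (in two of the quadrants: south-east) of another. -/
theorem volume_boxCornersAt (L : Set (ℝ × ℝ)) (a b : ℝ) : volume (boxCornersAt L a b) = 0 := by
  set N := boxCornersAt L a b
  have hcover : N ⊆ (N ∩ {p | p.1 < a ∧ p.2 < b}) ∪ (N ∩ {p | a < p.1 ∧ b < p.2}) ∪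
      ((N ∩ {p | p.1 < a ∧ b < p.2}) ∪ (N ∩ {p | a < p.1 ∧ p.2 < b})) := by
    intro p hp
    rcases hp.2.1.lt_or_gt with h1 | h1 <;> rcases hp.2.2.1.lt_or_gt with h2 | h2
    exacts [Or.inl (Or.inr ⟨hp, h1, h2⟩), Or.inr (Or.inr ⟨hp, h1, h2⟩),
      Or.inr (Or.inl ⟨hp, h1, h2⟩), Or.inl (Or.inl ⟨hp, h1, h2⟩)]
  refine measure_mono_null hcover (measure_union_null (measure_union_null ?_ ?_)
    (measure_union_null ?_ ?_))
  · refine volume_eq_zero_of_forall_not_lt_lt ?_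
    rintro p ⟨⟨-, -, -, hp⟩, hpa, hpb⟩ r ⟨⟨hrL, -⟩, hra, hrb⟩ ⟨h1, h2⟩
    exact hp r hrL ⟨mem_uIoo_of_lt h1 hra, mem_uIoo_of_lt h2 hrb⟩
  · refine volume_eq_zero_of_forall_not_lt_lt ?_
    rintro p ⟨⟨hpL, -⟩, hpa, hpb⟩ r ⟨⟨-, -, -, hr⟩, hra, hrb⟩ ⟨h1, h2⟩
    exact hr p hpL ⟨mem_uIoo_of_gt hpa h1, mem_uIoo_of_gt hpb h2⟩
  · refine volume_eq_zero_of_forall_not_lt_gt ?_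
    rintro p ⟨⟨-, -, -, hp⟩, hpa, hpb⟩ r ⟨⟨hrL, -⟩, hra, hrb⟩ ⟨h1, h2⟩
    exact hp r hrL ⟨mem_uIoo_of_lt h1 hra, mem_uIoo_of_gt hrb h2⟩
  · refine volume_eq_zero_of_forall_not_lt_gt ?_
    rintro p ⟨⟨hpL, -⟩, hpa, hpb⟩ r ⟨⟨-, -, -, hr⟩, hra, hrb⟩ ⟨h1, h2⟩
    exact hr p hpL ⟨mem_uIoo_of_gt hpa h1, mem_uIoo_of_lt h2 hpb⟩

theorem volume_boxCorners (L : Set (ℝ × ℝ)) : volume (boxCorners L) = 0 := by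
  have hsub : boxCorners L ⊆ ⋃ (q₁ : ℚ) (q₂ : ℚ), boxCornersAt L q₁ q₂ := by
    simp only [boxCorners, iUnion_subset_iff]
    rintro a b p ⟨hpL, ha, hb, hfree⟩
    obtain ⟨q₁, hq₁⟩ := exists_rat_mem_uIoo ha.symm
    obtain ⟨q₂, hq₂⟩ := exists_rat_mem_uIoo hb.symm
    refine mem_iUnion₂.2 ⟨q₁, q₂, hpL, ?_, ?_, fun r hrL hr => hfree r hrL ?_⟩
    · exact fun h => left_notMem_uIoo (h ▸ hq₁)
    · exact fun h => left_notMem_uIoo (h ▸ hq₂)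
    · exact ⟨uIoo_subset_uIoo_of_mem hq₁ hr.1, uIoo_subset_uIoo_of_mem hq₂ hr.2⟩
  exact measure_mono_null hsub (measure_iUnion_null fun _ => measure_iUnion_null fun _ =>
    volume_boxCornersAt L _ _)

theorem countable_boxEdgeAbscissae (L : Set (ℝ × ℝ)) : (boxEdgeAbscissae L).Countable := by
  let A : ℚ → ℚ → Set ℝ := fun q₁ q₂ => Prod.fst '' (L ∩ {r | (q₁ : ℝ) < r.2 ∧ r.2 < q₂})
  refine (countable_iUnion fun q₁ => countable_iUnion fun q₂ =>
    countable_setOf_uIoo_gap (A q₁ q₂)).mono ?_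
  rintro x ⟨p, hpL, rfl, a, ha, v, w, hvp, hpw, hfree⟩
  obtain ⟨q₁, hvq, hqp⟩ := exists_rat_btwn hvp
  obtain ⟨q₂, hpq, hqw⟩ := exists_rat_btwn hpw
  refine mem_iUnion₂.2 ⟨q₁, q₂, ⟨p, ⟨hpL, hqp, hpq⟩, rfl⟩, a, ha, ?_⟩
  refine eq_empty_of_forall_notMem ?_
  rintro _ ⟨⟨r, ⟨hrL, hr1, hr2⟩, rfl⟩, hr⟩
  exact hfree r hrL ⟨hr, hvq.trans hr1, hr2.trans hqw⟩

theorem mem_boxCorners_or_of_not_meetsBox {L : Set (ℝ × ℝ)} {s t v w : ℝ} (hst : s < t)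
    (hvw : v < w) (hL : ¬MeetsBox L s t v w) {p : ℝ × ℝ} (hp : p ∈ L) (h1 : s ≤ p.1)
    (h2 : p.1 ≤ t) (h3 : v ≤ p.2) (h4 : p.2 ≤ w) :
    ((p.1 = s ∨ p.1 = t) ∧ (p.2 = v ∨ p.2 = w) ∧ p ∈ boxCorners L) ∨
      ((p.1 = s ∨ p.1 = t) ∧ p.1 ∈ boxEdgeAbscissae L) ∨
      ((p.2 = v ∨ p.2 = w) ∧ p.2 ∈ boxEdgeAbscissae (Prod.swap '' L)) := by
  have hfree : ∀ r ∈ L, ¬(r.1 ∈ Ioo s t ∧ r.2 ∈ Ioo v w) :=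
    fun r hr h => hL ⟨r, hr, h.1.1, h.1.2, h.2.1, h.2.2⟩
  by_cases hx : p.1 = s ∨ p.1 = t <;> by_cases hy : p.2 = v ∨ p.2 = w
  · obtain ⟨a, ha, hua⟩ := exists_ne_uIoo_eq_Ioo hst hx
    obtain ⟨b, hb, hub⟩ := exists_ne_uIoo_eq_Ioo hvw hy
    refine Or.inl ⟨hx, hy, mem_iUnion₂.2 ⟨a, b, hp, ha, hb, ?_⟩⟩
    rwa [hua, hub]
  · obtain ⟨a, ha, hua⟩ := exists_ne_uIoo_eq_Ioo hst hx
    have hv : v < p.2 := h3.lt_of_ne fun h => hy (Or.inl h.symm)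
    have hw : p.2 < w := h4.lt_of_ne fun h => hy (Or.inr h)
    refine Or.inr (Or.inl ⟨hx, p, hp, rfl, a, ha, v, w, hv, hw, ?_⟩)
    rw [hua]
    exact fun r hr h => hfree r hr ⟨h.1, h.2⟩
  · obtain ⟨b, hb, hub⟩ := exists_ne_uIoo_eq_Ioo hvw hy
    have hs : s < p.1 := h1.lt_of_ne fun h => hx (Or.inl h.symm)
    have ht : p.1 < t := h2.lt_of_ne fun h => hx (Or.inr h)
    refine Or.inr (Or.inr ⟨hy, p.swap, ⟨p, hp, rfl⟩, rfl, b, hb, s, t, hs, ht, ?_⟩)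
    rintro _ ⟨r, hr, rfl⟩ h
    rw [hub] at h
    exact hfree r hr ⟨⟨h.2.1, h.2.2⟩, h.1⟩
  · have hs : s < p.1 := h1.lt_of_ne fun h => hx (Or.inl h.symm)
    have ht : p.1 < t := h2.lt_of_ne fun h => hx (Or.inr h)
    have hv : v < p.2 := h3.lt_of_ne fun h => hy (Or.inl h.symm)
    have hw : p.2 < w := h4.lt_of_ne fun h => hy (Or.inr h)
    exact absurd ⟨p, hp, hs, ht, hv, hw⟩ hL

section Sampling

variable {k : ℕ} {z : ℕ → ℝ}

lemma orderStat_eq_getElem {i : ℕ} (hi : i ∈ Icc 1 k) :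
    ∃ h, orderStat k z i =
      (Multiset.sort (Multiset.map z (Finset.Icc 1 k).val) (· ≤ ·))[i - 1]'h := by
  obtain ⟨hi1, hik⟩ := hi
  exact ⟨by simp; omega, List.getD_eq_getElem _ _ _⟩

lemma exists_eq_orderStat {i : ℕ} (hi : i ∈ Icc 1 k) : ∃ j, z j = orderStat k z i := by
  obtain ⟨h, heq⟩ := orderStat_eq_getElem (z := z) hi
  rw [heq]
  obtain ⟨j, -, hj⟩ := Multiset.mem_map.1 ((Multiset.mem_sort _).1 (List.getElem_mem h))
  exact ⟨j, hj⟩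

lemma orderStat_strictMonoOn (hz : InjOn z (Icc 1 k)) :
    StrictMonoOn (orderStat k z) (Icc 1 k) := by
  intro i hi j hj hij
  have hnodup : (Multiset.map z (Finset.Icc 1 k).val).Nodup :=
    (Finset.Icc 1 k).nodup.map_on fun a ha b hb => hz (by simpa using ha) (by simpa using hb)
  have hsorted := (Multiset.pairwise_sort (Multiset.map z (Finset.Icc 1 k).val)
    (· ≤ ·)).sortedLE.sortedLT_of_nodup (by rwa [← Multiset.coe_nodup, Multiset.sort_eq])
  obtain ⟨hi', hieq⟩ := orderStat_eq_getElem (z := z) hi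
  obtain ⟨hj', hjeq⟩ := orderStat_eq_getElem (z := z) hj
  rw [hieq, hjeq]
  exact hsorted.getElem_lt_getElem_of_lt (by simp only [mem_Icc] at hi hj; omega)


lemma uext_of_mem_Icc (u : ℕ → ℝ) {i : ℕ} (hi : i ∈ Icc 1 k) : uext k u i = u i := by
  simp only [uext, if_neg (by grind : i ≠ 0), if_pos hi.2]

lemma uext_zero (u : ℕ → ℝ) : uext k u 0 = -1 := rfl

lemma uext_of_lt (u : ℕ → ℝ) {i : ℕ} (hi : k < i) : uext k u i = 2 := by
  simp only [uext, if_neg (by omega : i ≠ 0), if_neg (by omega : ¬i ≤ k)]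

lemma uext_orderStat_strictMonoOn (hz : ∀ j, z j ∈ Icc 0 1) (hinj : InjOn z (Icc 1 k)) :
    StrictMonoOn (uext k (orderStat k z)) (Iic (k + 1)) := by
  have hval : ∀ i ∈ Icc 1 k, uext k (orderStat k z) i ∈ Icc (0 : ℝ) 1 := fun i hi => by
    obtain ⟨j, hj⟩ := exists_eq_orderStat (z := z) hi
    exact uext_of_mem_Icc _ hi ▸ hj ▸ hz j
  intro i hi j hj hij
  simp only [mem_Iic] at hi hj
  rcases Nat.eq_zero_or_pos i with rfl | hi0 <;>
    rcases (by omega : j ≤ k ∨ j = k + 1) with hjk | rfl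
  · rw [uext_zero]
    linarith [(hval j ⟨hij, hjk⟩).1]
  · rw [uext_zero, uext_of_lt _ k.lt_succ_self]
    norm_num
  · rw [uext_of_mem_Icc _ ⟨hi0, by omega⟩, uext_of_mem_Icc _ ⟨by omega, hjk⟩]
    exact orderStat_strictMonoOn hinj ⟨hi0, by omega⟩ ⟨by omega, hjk⟩ hij
  · rw [uext_of_lt _ k.lt_succ_self]
    linarith [(hval i ⟨hi0, by omega⟩).2]

lemma exists_eq_uext_orderStat {i : ℕ} (h : uext k (orderStat k z) i ∈ Icc 0 1) :
    ∃ j, z j = uext k (orderStat k z) i := by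
  by_cases hi : i ∈ Icc 1 k
  · rw [uext_of_mem_Icc _ hi]
    exact exists_eq_orderStat hi
  · rcases (by simp only [mem_Icc] at hi; omega : i = 0 ∨ k < i) with rfl | hki
    · norm_num [uext_zero] at h
    · norm_num [uext_of_lt _ hki] at h

theorem meetsBox_of_meetsClosedBox_orderStat {L : Set (ℝ × ℝ)} (hL : L ⊆ Tri)
    (hz : ∀ j, z j ∈ Icc 0 1) (hinj : Function.Injective z)
    (hedge : ∀ j, z j ∉ boxEdgeAbscissae L) (hedge' : ∀ j, z j ∉ boxEdgeAbscissae (Prod.swap '' L))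
    (hcorner : ∀ i j, i ≠ j → (z i, z j) ∉ boxCorners L) {a b : ℕ} (ha : 1 ≤ a) (hab : a < b)
    (hbk : b ≤ k)
    (hclosed : MeetsClosedBox L (uext k (orderStat k z) (a - 1)) (uext k (orderStat k z) a)
      (uext k (orderStat k z) b) (uext k (orderStat k z) (b + 1))) :
    MeetsBox L (uext k (orderStat k z) (a - 1)) (uext k (orderStat k z) a)
      (uext k (orderStat k z) b) (uext k (orderStat k z) (b + 1)) := by
  set u := uext k (orderStat k z)
  obtain ⟨p, hp, h1, h2, h3, h4⟩ := hclosed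
  by_contra hopen
  have hmono := uext_orderStat_strictMonoOn hz hinj.injOn (k := k)
  have hst : u (a - 1) < u a := hmono (by simp; omega) (by simp; omega) (by omega)
  have htv : u a < u b := hmono (by simp; omega) (by simp; omega) hab
  have hvw : u b < u (b + 1) := hmono (by simp; omega) (by simp; omega) (by omega)
  obtain ⟨hp0, hp12, hp1⟩ := hL hp
  have hx : p.1 ∈ Icc (0 : ℝ) 1 := ⟨hp0, hp12.trans hp1⟩
  have hy : p.2 ∈ Icc (0 : ℝ) 1 := ⟨hp0.trans hp12, hp1⟩
  have hsample : ∀ {i : ℕ} {c : ℝ}, c ∈ Icc 0 1 → c = u i → ∃ j, z j = c := by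
    rintro i c hc rfl
    exact exists_eq_uext_orderStat hc
  rcases mem_boxCorners_or_of_not_meetsBox hst hvw hopen hp h1 h2 h3 h4 with
    ⟨hxb, hyb, hpc⟩ | ⟨hxb, hpe⟩ | ⟨hyb, hpe⟩
  · obtain ⟨i, hi⟩ := hxb.elim (hsample hx) (hsample hx)
    obtain ⟨j, hj⟩ := hyb.elim (hsample hy) (hsample hy)
    have hij : i ≠ j := by
      rintro rfl
      exact ((h2.trans_lt htv).trans_le h3).ne (hi.symm.trans hj)
    exact hcorner i j hij (by rw [hi, hj]; exact hpc)
  · obtain ⟨i, hi⟩ := hxb.elim (hsample hx) (hsample hx)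
    exact hedge i (hi ▸ hpe)
  · obtain ⟨j, hj⟩ := hyb.elim (hsample hy) (hsample hy)
    exact hedge' j (hj ▸ hpe)

end Sampling

section Hausdorff

lemma dist_le_dist1 (p q : ℝ × ℝ) : dist p q ≤ dist1 p q := by
  rw [Prod.dist_eq, Real.dist_eq, Real.dist_eq]
  exact max_le (le_add_of_nonneg_right (abs_nonneg _)) (le_add_of_nonneg_left (abs_nonneg _))

lemma dist1_le_two {p q : ℝ × ℝ} (hp : p ∈ Tri) (hq : q ∈ Tri) : dist1 p q ≤ 2 := by
  obtain ⟨hp0, hp12, hp1⟩ := hp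
  obtain ⟨hq0, hq12, hq1⟩ := hq
  have h1 : |p.1 - q.1| ≤ 1 := abs_le.2 ⟨by linarith, by linarith⟩
  have h2 : |p.2 - q.2| ≤ 1 := abs_le.2 ⟨by linarith, by linarith⟩
  unfold dist1
  linarith

lemma hd1_comm (A B : Set (ℝ × ℝ)) : hd1 A B = hd1 B A := max_comm _ _

lemma exists_dist1_lt_of_hd1_lt {A B : Set (ℝ × ℝ)} (hA : A ⊆ Tri) (hB : B ⊆ Tri)
    (hBne : B.Nonempty) {q : ℝ × ℝ} (hq : q ∈ A) {ε : ℝ} (h : hd1 A B < ε) :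
    ∃ p ∈ B, dist1 q p < ε := by
  obtain ⟨b, hb⟩ := hBne
  have hbdd : BddAbove ((fun p => sInf (dist1 p '' B)) '' A) := by
    refine ⟨2, ?_⟩
    rintro _ ⟨p, hp, rfl⟩
    refine csInf_le_of_le (show BddBelow (dist1 p '' B) from ⟨0, ?_⟩) (mem_image_of_mem _ hb)
      (dist1_le_two (hA hp) (hB hb))
    rintro _ ⟨r, -, rfl⟩
    exact add_nonneg (abs_nonneg _) (abs_nonneg _)
  have hinf : sInf (dist1 q '' B) < ε :=
    (le_csSup hbdd (mem_image_of_mem _ hq)).trans_lt ((le_max_left _ _).trans_lt h)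
  obtain ⟨_, ⟨p, hp, rfl⟩, hqp⟩ := exists_lt_of_csInf_lt ⟨_, mem_image_of_mem _ hb⟩ hinf
  exact ⟨p, hp, hqp⟩

lemma MemISinf.nonempty {K : Set (ℝ × ℝ)} (hK : MemISinf K) : K.Nonempty :=
  ⟨(0, 0), hK.2.2 ⟨0, le_rfl, zero_le_one, rfl⟩⟩

variable {K : ℕ → Set (ℝ × ℝ)} {L : Set (ℝ × ℝ)} {s t v w : ℝ}

lemma eventually_meetsBox (hK : ∀ m, MemISinf (K m)) (hL : MemISinf L)
    (hconv : Tendsto (fun m => hd1 (K m) L) atTop (nhds 0)) (h : MeetsBox L s t v w) :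
    ∀ᶠ m in atTop, MeetsBox (K m) s t v w := by
  obtain ⟨p, hp, h1, h2, h3, h4⟩ := h
  have hbox : p ∈ Ioo s t ×ˢ Ioo v w := ⟨⟨h1, h2⟩, h3, h4⟩
  obtain ⟨ε, hε, hball⟩ := Metric.isOpen_iff.1 (isOpen_Ioo.prod isOpen_Ioo) p hbox
  filter_upwards [hconv.eventually (gt_mem_nhds hε)] with m hm
  obtain ⟨q, hq, hpq⟩ := exists_dist1_lt_of_hd1_lt hL.2.1 (hK m).2.1 (hK m).nonempty hp
    (by rwa [hd1_comm])
  obtain ⟨⟨hq1, hq2⟩, hq3, hq4⟩ :=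
    hball (Metric.mem_ball'.2 ((dist_le_dist1 p q).trans_lt hpq))
  exact ⟨q, hq, hq1, hq2, hq3, hq4⟩

lemma eventually_not_meetsBox (hK : ∀ m, MemISinf (K m)) (hL : MemISinf L)
    (hconv : Tendsto (fun m => hd1 (K m) L) atTop (nhds 0)) (h : ¬MeetsClosedBox L s t v w) :
    ∀ᶠ m in atTop, ¬MeetsBox (K m) s t v w := by
  have hsub : Icc s t ×ˢ Icc v w ⊆ Lᶜ :=
    fun p hp hpL => h ⟨p, hpL, hp.1.1, hp.1.2, hp.2.1, hp.2.2⟩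
  obtain ⟨δ, hδ, hthick⟩ := (isCompact_Icc.prod isCompact_Icc).exists_thickening_subset_open
    hL.1.isClosed.isOpen_compl hsub
  filter_upwards [hconv.eventually (gt_mem_nhds hδ)] with m hm
  rintro ⟨q, hq, h1, h2, h3, h4⟩
  obtain ⟨p, hp, hqp⟩ := exists_dist1_lt_of_hd1_lt (hK m).2.1 hL.2.1 hL.nonempty hq hm
  refine hthick (Metric.mem_thickening_iff.2 ⟨q, ⟨⟨h1.le, h2.le⟩, h3.le, h4.le⟩, ?_⟩) hp
  rw [dist_comm]
  exact (dist_le_dist1 q p).trans_lt hqp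

lemma eventually_meetsBox_iff (hK : ∀ m, MemISinf (K m)) (hL : MemISinf L)
    (hconv : Tendsto (fun m => hd1 (K m) L) atTop (nhds 0))
    (hreg : MeetsClosedBox L s t v w → MeetsBox L s t v w) :
    ∀ᶠ m in atTop, (MeetsBox (K m) s t v w ↔ MeetsBox L s t v w) := by
  by_cases h : MeetsBox L s t v w
  · exact (eventually_meetsBox hK hL hconv h).mono fun _ hm => iff_of_true hm h
  · exact (eventually_not_meetsBox hK hL hconv (mt hreg h)).mono fun _ hm => iff_of_false hm h

end Hausdorff

lemma phiInf_congr {k : ℕ} {K L : Set (ℝ × ℝ)} {u : ℕ → ℝ}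
    (h : ∀ a b, 1 ≤ a → a < b → b ≤ k →
      (MeetsBox K (uext k u (a - 1)) (uext k u a) (uext k u b) (uext k u (b + 1)) ↔
        MeetsBox L (uext k u (a - 1)) (uext k u a) (uext k u b) (uext k u (b + 1)))) :
    phiInf k K u = phiInf k L u := by
  ext e
  simp only [phiInf, mem_union, mem_ofPred_eq]
  exact or_congr Iff.rfl <| exists_congr fun a => exists_congr fun b =>
    and_congr_right fun h1 => and_congr_right fun h2 => and_congr_right fun h3 =>
      and_congr_right fun _ => h a b h1 h2 h3

theorem eventually_phiInf_eq {K : ℕ → Set (ℝ × ℝ)} {L : Set (ℝ × ℝ)}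
    (hK : ∀ m, MemISinf (K m)) (hL : MemISinf L)
    (hconv : Tendsto (fun m => hd1 (K m) L) atTop (nhds 0)) {k : ℕ} {u : ℕ → ℝ}
    (hreg : ∀ a b, 1 ≤ a → a < b → b ≤ k →
      MeetsClosedBox L (uext k u (a - 1)) (uext k u a) (uext k u b) (uext k u (b + 1)) →
        MeetsBox L (uext k u (a - 1)) (uext k u a) (uext k u b) (uext k u (b + 1))) :
    ∀ᶠ m in atTop, phiInf k (K m) u = phiInf k L u := by
  filter_upwards [(finite_Iic k).eventually_all.2 fun b hb => (finite_Ico 1 b).eventually_all.2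
    fun a ha => eventually_meetsBox_iff hK hL hconv (hreg a b ha.1 ha.2 hb)] with m hm
  exact phiInf_congr fun a b h1 h2 h3 => hm b h3 a ⟨h1, h2⟩

section Uniform

variable {Ω : Type*} [MeasurableSpace Ω] {μ : Measure Ω} {U : ℕ → Ω → ℝ}

lemma IsUniformIID.ae_notMem (hU : IsUniformIID μ U) (j : ℕ) {E : Set ℝ}
    (hE : volume.restrict (Icc (0 : ℝ) 1) E = 0) : ∀ᵐ ω ∂μ, U j ω ∉ E :=
  ae_of_ae_map (hU.1 j).aemeasurable <| by
    rw [hU.2.2 j]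
    exact measure_eq_zero_iff_ae_notMem.1 hE

lemma IsUniformIID.ae_forall_mem_Icc (hU : IsUniformIID μ U) :
    ∀ᵐ ω ∂μ, ∀ j, U j ω ∈ Icc (0 : ℝ) 1 := by
  refine ae_all_iff.2 fun j => (hU.ae_notMem j (E := (Icc 0 1)ᶜ) ?_).mono fun _ => not_not.1
  simp [Measure.restrict_apply' measurableSet_Icc]

lemma IsUniformIID.ae_forall_notMem (hU : IsUniformIID μ U) {E : Set ℝ} (hE : volume E = 0) :
    ∀ᵐ ω ∂μ, ∀ j, U j ω ∉ E :=
  ae_all_iff.2 fun j =>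
    hU.ae_notMem j (nonpos_iff_eq_zero.1 (hE ▸ Measure.restrict_apply_le _ _))

lemma IsUniformIID.ae_forall_pair_notMem [IsFiniteMeasure μ] (hU : IsUniformIID μ U)
    {N : Set (ℝ × ℝ)} (hN : volume N = 0) : ∀ᵐ ω ∂μ, ∀ i j, i ≠ j → (U i ω, U j ω) ∉ N := by
  refine ae_all_iff.2 fun i => ae_all_iff.2 fun j => ?_
  by_cases hij : i = j
  · exact Eventually.of_forall fun _ h => absurd hij h
  have hmap : μ.map (fun ω => (U i ω, U j ω)) =
      (volume.restrict (Icc (0 : ℝ) 1)).prod (volume.restrict (Icc (0 : ℝ) 1)) := by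
    rw [(indepFun_iff_map_prod_eq_prod_map_map (hU.1 i).aemeasurable (hU.1 j).aemeasurable).1
      (hU.2.1.indepFun hij), hU.2.2 i, hU.2.2 j]
  have hN' : μ.map (fun ω => (U i ω, U j ω)) N = 0 := by
    rw [hmap, Measure.prod_restrict, ← Measure.volume_eq_prod]
    exact nonpos_iff_eq_zero.1 (hN ▸ Measure.restrict_apply_le _ _)
  exact (ae_of_ae_map ((hU.1 i).prodMk (hU.1 j)).aemeasurable
    (measure_eq_zero_iff_ae_notMem.1 hN')).mono fun _ h _ => h

lemma IsUniformIID.ae_injective [IsFiniteMeasure μ] (hU : IsUniformIID μ U) :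
    ∀ᵐ ω ∂μ, Function.Injective fun j => U j ω := by
  have hdiag : volume {p : ℝ × ℝ | p.1 = p.2} = 0 :=
    volume_eq_zero_of_forall_not_lt_gt fun p hp r hr h => by
      simp only [mem_ofPred_eq] at hp hr
      linarith [h.1, h.2]
  filter_upwards [hU.ae_forall_pair_notMem hdiag] with ω hω i j hij
  by_contra hne
  exact hω i j hne hij

end Uniform

/-- Let `(U_i)` be iid uniform on `[0,1]` and `K_m → K` in `(IS(∞), d_H)`.
Then for every `k`, almost surely `φ^∞_k(K_m, U_{1:k},…,U_{k:k}) = φ^∞_k(K, U_{1:k},…,U_{k:k})`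
for all sufficiently large `m` (a.s. convergence in the discrete space `IS(k)`). -/
theorem stmt12 {Ω : Type*} [MeasurableSpace Ω] (μ : Measure Ω) [IsProbabilityMeasure μ]
    (U : ℕ → Ω → ℝ) (hU : IsUniformIID μ U)
    (K : ℕ → Set (ℝ × ℝ)) (L : Set (ℝ × ℝ))
    (hK : ∀ m, MemISinf (K m)) (hL : MemISinf L)
    (hconv : Tendsto (fun m => hd1 (K m) L) atTop (nhds 0)) :
    ∀ k, 1 ≤ k → ∀ᵐ ω ∂μ, ∃ N, ∀ m, N ≤ m →
      phiInf k (K m) (fun i => orderStat k (fun s => U s ω) i) =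
        phiInf k L (fun i => orderStat k (fun s => U s ω) i) := by
  intro k _
  filter_upwards [hU.ae_forall_mem_Icc, hU.ae_injective,
    hU.ae_forall_notMem ((countable_boxEdgeAbscissae L).measure_zero _),
    hU.ae_forall_notMem ((countable_boxEdgeAbscissae (Prod.swap '' L)).measure_zero _),
    hU.ae_forall_pair_notMem (volume_boxCorners L)] with ω hz hinj hedge hedge' hcorner
  exact eventually_atTop.1 (eventually_phiInf_eq hK hL hconv fun a b ha hab hbk =>
    meetsBox_of_meetsClosedBox_orderStat hL.2.1 hz hinj hedge hedge' hcorner ha hab hbk)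

end
end

section
/- Let (Y₁,Y₂,Y₃,Y₄) be a random vector with values in [0,1]⁴ satisfying Y₁ < Y₂ < Y₃ < Y₄ almost surely, and such that for all i ≠ j the conditional distribution of Y_i given Y_j is almost surely nonatomic (diffuse). Let R := [Y₁,Y₂] × [Y₃,Y₄] and int(R) := (Y₁,Y₂) × (Y₃,Y₄). Then for every nonempty compact subset K ⊆ ▲, the set {K ∩ R ≠ ∅ and K ∩ int(R) = ∅} is a measurable event of probability zero; i.e., the random rectangle R almost surely intersects K in its interior or not at all. -/
open TopologicalSpace Filter Set MeasureTheory ProbabilityTheory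
open scoped ENNReal symmDiff

noncomputable section

/-!
Let `p ∈ K` lie on the boundary of `R = [a,b] × [c,d]` while `K` misses the interior. Reflecting
the axes if necessary, `p` lies in the lower-left part of `R`, and then either `p = (a, c)` and
`K` misses a small box to the upper right of `p`, or `p` lies on the left (bottom) edge and `K`
misses a small box to the right of (above) `p`. At a fixed scale, close points of the second kind
share their abscissa, so these abscissae form a countable set, hit with probability zero by a
variable without atoms. Close points of the first kind form an antichain, which lies on the
graph of an antitone function off countably many vertical lines; the corner `(Y₁, Y₃)` (or a
reflection of it) lands there with probability zero because the conditional law of `Y₃` given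
`Y₁` has no atoms.
-/

open Metric

theorem abs_sub_lt_of_mem_ball_half {x p q : ℝ × ℝ} {δ : ℝ} (hp : p ∈ ball x (δ / 2))
    (hq : q ∈ ball x (δ / 2)) : |q.1 - p.1| < δ ∧ |q.2 - p.2| < δ := by
  have h : dist q p < δ := by linarith [dist_triangle_right q p x, mem_ball.1 hp, mem_ball.1 hq]
  rwa [Prod.dist_eq, max_lt_iff, Real.dist_eq, Real.dist_eq] at h

theorem exists_countable_cover_inter_ball (s : Set (ℝ × ℝ)) {r : ℝ} (hr : 0 < r) :
    ∃ t : Set (ℝ × ℝ), t.Countable ∧ s ⊆ ⋃ x ∈ t, s ∩ ball x r := by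
  obtain ⟨t, ht, hcover⟩ := _root_.countable_cover_nhds fun x : ℝ × ℝ => ball_mem_nhds x hr
  refine ⟨t, ht, fun p hp => ?_⟩
  obtain ⟨x, hx, hpx⟩ := mem_iUnion₂.1 (hcover ▸ mem_univ p)
  exact mem_iUnion₂.2 ⟨x, hx, hp, hpx⟩

def rightGapPoints (δ : ℝ) (S : Set (ℝ × ℝ)) : Set (ℝ × ℝ) :=
  {p ∈ S | Disjoint S (Ioo p.1 (p.1 + δ) ×ˢ Ioo (p.2 - δ) (p.2 + δ))}

def cornerGapPoints (δ : ℝ) (S : Set (ℝ × ℝ)) : Set (ℝ × ℝ) :=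
  {p ∈ S | Disjoint S (Ioo p.1 (p.1 + δ) ×ˢ Ioo p.2 (p.2 + δ))}

theorem countable_image_fst_rightGapPoints {δ : ℝ} (hδ : 0 < δ) (S : Set (ℝ × ℝ)) :
    (Prod.fst '' rightGapPoints δ S).Countable := by
  obtain ⟨t, ht, hcover⟩ := exists_countable_cover_inter_ball (rightGapPoints δ S) (half_pos hδ)
  refine (ht.biUnion fun x _ => Subsingleton.countable ?_).mono
    ((image_mono hcover).trans (image_iUnion₂ _ _).subset)
  have hfst : ∀ p ∈ rightGapPoints δ S ∩ ball x (δ / 2),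
      ∀ q ∈ rightGapPoints δ S ∩ ball x (δ / 2), ¬p.1 < q.1 := by
    rintro p ⟨⟨-, hp⟩, hpx⟩ q ⟨⟨hq, -⟩, hqx⟩ hpq
    obtain ⟨h1, h2⟩ := abs_sub_lt_of_mem_ball_half hpx hqx
    rw [abs_lt] at h1 h2
    exact disjoint_left.1 hp hq ⟨⟨hpq, by linarith⟩, by constructor <;> linarith⟩
  rintro _ ⟨p, hp, rfl⟩ _ ⟨q, hq, rfl⟩
  exact le_antisymm (not_lt.1 (hfst q hq p hp)) (not_lt.1 (hfst p hp q hq))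

theorem exists_antitone_eq_of_antichain {A : Set (ℝ × ℝ)} {m M : ℝ}
    (hA : ∀ p ∈ A, p.2 ∈ Icc m M) (hanti : ∀ p ∈ A, ∀ q ∈ A, p.1 < q.1 → q.2 ≤ p.2) :
    ∃ g : ℝ → ℝ, Antitone g ∧ ∀ p ∈ A, ContinuousAt g p.1 → p.2 = g p.1 := by
  set B : ℝ → Set ℝ := fun x => insert m (Prod.snd '' {q ∈ A | x ≤ q.1})
  have hB : ∀ x, BddAbove (B x) := fun x => by
    refine ⟨max m M, ?_⟩
    rintro _ (rfl | ⟨q, ⟨hq, -⟩, rfl⟩)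
    exacts [le_max_left _ _, (hA q hq).2.trans (le_max_right _ _)]
  refine ⟨fun x => sSup (B x), fun x x' hxx' => csSup_le_csSup (hB x) (insert_nonempty _ _)
    (insert_subset_insert (image_mono fun q hq => ⟨hq.1, hxx'.trans hq.2⟩)),
    fun p hp hcont => ?_⟩
  refine le_antisymm (le_csSup (hB _) (mem_insert_of_mem _ ⟨p, ⟨hp, le_rfl⟩, rfl⟩)) ?_
  refine le_of_tendsto (hcont.tendsto.mono_left (nhdsWithin_le_nhds (s := Ioi p.1))) ?_
  filter_upwards [self_mem_nhdsWithin] with t ht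
  refine csSup_le (insert_nonempty _ _) ?_
  rintro _ (rfl | ⟨q, ⟨hq, htq⟩, rfl⟩)
  exacts [(hA p hp).1, hanti p hp q hq (lt_of_lt_of_le ht htq)]

-- Contains the corner `(a, c)` of every rectangle `[a, b] × [c, d]` whose interior misses `S` and
-- which meets `S` at a point `p` with `p.1 < b` and `p.2 < d` (`mem_touchSet`).
def touchSet (S : Set (ℝ × ℝ)) : Set (ℝ × ℝ) :=
  ⋃ n : ℕ, cornerGapPoints (1 / (n + 1)) S ∪
    (Prod.fst '' rightGapPoints (1 / (n + 1)) S) ×ˢ univ ∪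
    univ ×ˢ (Prod.fst '' rightGapPoints (1 / (n + 1)) (Prod.swap ⁻¹' S))

theorem mem_touchSet {S : Set (ℝ × ℝ)} {p : ℝ × ℝ} {a b c d : ℝ} (hp : p ∈ S)
    (hap : a ≤ p.1) (hpb : p.1 < b) (hcp : c ≤ p.2) (hpd : p.2 < d)
    (hS : Disjoint S (Ioo a b ×ˢ Ioo c d)) : (a, c) ∈ touchSet S := by
  simp only [touchSet, mem_iUnion, mem_union, mem_prod, mem_univ, and_true, true_and]
  rcases hap.eq_or_lt with rfl | ha <;> rcases hcp.eq_or_lt with rfl | hc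
  · obtain ⟨n, hn⟩ := exists_nat_one_div_lt (lt_min (sub_pos.2 hpb) (sub_pos.2 hpd))
    rw [lt_min_iff] at hn
    refine ⟨n, Or.inl (Or.inl ⟨hp, hS.mono_right (prod_mono ?_ ?_)⟩)⟩ <;>
      exact Ioo_subset_Ioo_right (by linarith)
  · obtain ⟨n, hn⟩ := exists_nat_one_div_lt
      (lt_min (sub_pos.2 hpb) (lt_min (sub_pos.2 hc) (sub_pos.2 hpd)))
    rw [lt_min_iff, lt_min_iff] at hn
    refine ⟨n, Or.inl (Or.inr ⟨p, ⟨hp, hS.mono_right (prod_mono ?_ ?_)⟩, rfl⟩)⟩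
    exacts [Ioo_subset_Ioo_right (by linarith), Ioo_subset_Ioo (by linarith) (by linarith)]
  · obtain ⟨n, hn⟩ := exists_nat_one_div_lt
      (lt_min (sub_pos.2 hpd) (lt_min (sub_pos.2 ha) (sub_pos.2 hpb)))
    rw [lt_min_iff, lt_min_iff] at hn
    refine ⟨n, Or.inr ⟨(p.2, p.1), ⟨hp, ?_⟩, rfl⟩⟩
    refine (preimage_swap_prod (Ioo a b) (Ioo p.2 d) ▸ hS.preimage Prod.swap).mono_right
      (prod_mono ?_ ?_)
    exacts [Ioo_subset_Ioo_right (by linarith), Ioo_subset_Ioo (by linarith) (by linarith)]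
  · exact (disjoint_left.1 hS hp ⟨⟨ha, hpb⟩, hc, hpd⟩).elim

theorem mem_touchSet_of_boundary {K : Set (ℝ × ℝ)} {a b c d : ℝ} (hab : a < b) (hcd : c < d)
    (hne : (K ∩ Icc a b ×ˢ Icc c d).Nonempty) (hemp : ¬(K ∩ Ioo a b ×ˢ Ioo c d).Nonempty) :
    (a, c) ∈ touchSet K ∨ (-b, c) ∈ touchSet ((fun p => (-p.1, p.2)) ⁻¹' K) ∨
      (a, -d) ∈ touchSet ((fun p => (p.1, -p.2)) ⁻¹' K) ∨
      (-b, -d) ∈ touchSet ((fun p => (-p.1, -p.2)) ⁻¹' K) := by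
  obtain ⟨p, hpK, ⟨hap, hpb⟩, hcp, hpd⟩ := hne
  have hK : ∀ q ∈ K, q.1 ∈ Ioo a b → q.2 ∈ Ioo c d → False :=
    fun q hq h1 h2 => hemp ⟨q, hq, h1, h2⟩
  -- reflect each axis along which `p` is not strictly below the upper end of the rectangle
  rcases lt_or_ge p.1 b with hx | hx <;> rcases lt_or_ge p.2 d with hy | hy
  · exact Or.inl (mem_touchSet hpK hap hx hcp hy
      (disjoint_left.2 fun q hq ⟨h1, h2⟩ => hK q hq h1 h2))
  · exact Or.inr (Or.inr (Or.inl (mem_touchSet (p := (p.1, -p.2)) (b := b) (d := -c)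
      (by simpa using hpK) hap hx (by linarith) (by linarith)
      (disjoint_left.2 fun q hq ⟨h1, h2⟩ => hK _ hq h1 (neg_mem_Ioo_iff.2 h2)))))
  · exact Or.inr (Or.inl (mem_touchSet (p := (-p.1, p.2)) (b := -a) (d := d)
      (by simpa using hpK) (by linarith) (by linarith [hab.trans_le hx]) hcp hy
      (disjoint_left.2 fun q hq ⟨h1, h2⟩ => hK _ hq (neg_mem_Ioo_iff.2 h1) h2)))
  · exact Or.inr (Or.inr (Or.inr (mem_touchSet (p := (-p.1, -p.2)) (b := -a) (d := -c)
      (by simpa using hpK) (by linarith) (by linarith [hab.trans_le hx]) (by linarith)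
      (by linarith [hcd.trans_le hy]) (disjoint_left.2 fun q hq ⟨h1, h2⟩ =>
        hK _ hq (neg_mem_Ioo_iff.2 h1) (neg_mem_Ioo_iff.2 h2)))))

theorem isClosed_setOf_inter_Icc_prod_Icc_nonempty {K : Set (ℝ × ℝ)} (hK : IsCompact K) :
    IsClosed {v : ℝ × ℝ × ℝ × ℝ | (K ∩ Icc v.1 v.2.1 ×ˢ Icc v.2.2.1 v.2.2.2).Nonempty} := by
  have : CompactSpace K := isCompact_iff_compactSpace.1 hK
  have hcl : IsClosed {x : (ℝ × ℝ × ℝ × ℝ) × K |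
      (x.2 : ℝ × ℝ) ∈ Icc x.1.1 x.1.2.1 ×ˢ Icc x.1.2.2.1 x.1.2.2.2} := by
    simp only [mem_prod, mem_Icc, ofPred_and]
    refine ((isClosed_le ?_ ?_).inter (isClosed_le ?_ ?_)).inter
      ((isClosed_le ?_ ?_).inter (isClosed_le ?_ ?_)) <;> fun_prop
  convert isClosedMap_fst_of_compactSpace _ hcl using 1
  ext v
  constructor
  · rintro ⟨p, hpK, hp⟩
    exact ⟨(v, ⟨p, hpK⟩), hp, rfl⟩
  · rintro ⟨⟨w, p⟩, hp, rfl⟩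
    exact ⟨p, p.2, hp⟩

theorem isOpen_setOf_inter_Ioo_prod_Ioo_nonempty (K : Set (ℝ × ℝ)) :
    IsOpen {v : ℝ × ℝ × ℝ × ℝ | (K ∩ Ioo v.1 v.2.1 ×ˢ Ioo v.2.2.1 v.2.2.2).Nonempty} := by
  have : {v : ℝ × ℝ × ℝ × ℝ | (K ∩ Ioo v.1 v.2.1 ×ˢ Ioo v.2.2.1 v.2.2.2).Nonempty} =
      ⋃ p ∈ K, {v | p ∈ Ioo v.1 v.2.1 ×ˢ Ioo v.2.2.1 v.2.2.2} := by
    ext v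
    simp only [mem_iUnion, exists_prop]
    rfl
  rw [this]
  refine isOpen_biUnion fun p _ => ?_
  simp only [mem_prod, mem_Ioo, ofPred_and]
  refine ((isOpen_lt ?_ ?_).inter (isOpen_lt ?_ ?_)).inter
    ((isOpen_lt ?_ ?_).inter (isOpen_lt ?_ ?_)) <;> fun_prop

section Probability

variable {Ω : Type*} [MeasurableSpace Ω] {μ : Measure Ω} {X Z : Ω → ℝ}

theorem measure_eq_comp_eq_zero_of_condDistrib [IsFiniteMeasure μ] (hX : Measurable X)
    (hZ : Measurable Z) (hZX : ∀ᵐ x ∂μ.map X, ∀ r, condDistrib Z X μ x {r} = 0)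
    {g : ℝ → ℝ} (hg : Measurable g) : μ {ω | Z ω = g (X ω)} = 0 := by
  have hgraph : MeasurableSet {p : ℝ × ℝ | p.2 = g p.1} :=
    measurableSet_eq_fun measurable_snd (hg.comp measurable_fst)
  have hpair : Measurable fun ω => (X ω, Z ω) := hX.prodMk hZ
  rw [← preimage_ofPred_eq (p := fun p : ℝ × ℝ => p.2 = g p.1) (f := fun ω => (X ω, Z ω)),
    ← Measure.map_apply hpair hgraph, ← compProd_map_condDistrib hZ.aemeasurable,
    Measure.compProd_apply hgraph,
    lintegral_eq_zero_iff (Kernel.measurable_kernel_prodMk_left hgraph)]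
  filter_upwards [hZX] with x hx
  exact hx (g x)

theorem measure_preimage_countable_eq_zero (hX : ∀ r, μ {ω | X ω = r} = 0) {V : Set ℝ}
    (hV : V.Countable) : μ (X ⁻¹' V) = 0 :=
  measure_mono_null (t := ⋃ r ∈ V, {ω | X ω = r}) (fun _ hω => mem_biUnion hω rfl)
    ((measure_biUnion_null_iff hV).2 fun r _ => hX r)

structure DiffusePair (μ : Measure Ω) (X Z : Ω → ℝ) : Prop where
  measure_left_eq : ∀ r, μ {ω | X ω = r} = 0
  measure_right_eq : ∀ r, μ {ω | Z ω = r} = 0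
  measure_graph : ∀ g : ℝ → ℝ, Measurable g → μ {ω | Z ω = g (X ω)} = 0

namespace DiffusePair

theorem of_condDistrib [IsFiniteMeasure μ] (hX : Measurable X) (hZ : Measurable Z)
    (hXZ : ∀ᵐ z ∂μ.map Z, ∀ r, condDistrib X Z μ z {r} = 0)
    (hZX : ∀ᵐ x ∂μ.map X, ∀ r, condDistrib Z X μ x {r} = 0) : DiffusePair μ X Z where
  measure_left_eq r :=
    measure_eq_comp_eq_zero_of_condDistrib hZ hX hXZ (measurable_const (a := r))
  measure_right_eq r :=
    measure_eq_comp_eq_zero_of_condDistrib hX hZ hZX (measurable_const (a := r))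
  measure_graph _ := measure_eq_comp_eq_zero_of_condDistrib hX hZ hZX

theorem neg_left (h : DiffusePair μ X Z) : DiffusePair μ (fun ω => -X ω) Z where
  measure_left_eq r := by simpa [neg_eq_iff_eq_neg] using h.measure_left_eq (-r)
  measure_right_eq := h.measure_right_eq
  measure_graph g hg := h.measure_graph (fun x => g (-x)) (hg.comp measurable_neg)

theorem neg_right (h : DiffusePair μ X Z) : DiffusePair μ X (fun ω => -Z ω) where
  measure_left_eq := h.measure_left_eq
  measure_right_eq r := by simpa [neg_eq_iff_eq_neg] using h.measure_right_eq (-r)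
  measure_graph g hg := by simpa [neg_eq_iff_eq_neg] using h.measure_graph (fun x => -g x) hg.neg

theorem measure_cornerGapPoints (h : DiffusePair μ X Z) {δ : ℝ} (hδ : 0 < δ)
    (S : Set (ℝ × ℝ)) : μ {ω | (X ω, Z ω) ∈ cornerGapPoints δ S} = 0 := by
  obtain ⟨t, ht, hcover⟩ := exists_countable_cover_inter_ball (cornerGapPoints δ S) (half_pos hδ)
  refine measure_mono_null (preimage_mono (f := fun ω => (X ω, Z ω)) hcover) ?_
  rw [preimage_iUnion₂]
  refine (measure_biUnion_null_iff ht).2 fun x _ => ?_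
  -- within a ball of radius δ/2, corner-gap points form an antichain
  obtain ⟨g, hg, hgraph⟩ := exists_antitone_eq_of_antichain
    (A := cornerGapPoints δ S ∩ ball x (δ / 2)) (m := x.2 - δ) (M := x.2 + δ)
    (fun p hp => by
      have := (abs_lt.1 (abs_sub_lt_of_mem_ball_half (mem_ball_self (half_pos hδ)) hp.2).2)
      constructor <;> linarith)
    (by
      rintro p ⟨⟨-, hp⟩, hpx⟩ q ⟨⟨hq, -⟩, hqx⟩ hpq
      by_contra! hpq'
      obtain ⟨h1, h2⟩ := abs_sub_lt_of_mem_ball_half hpx hqx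
      rw [abs_lt] at h1 h2
      exact disjoint_left.1 hp hq ⟨⟨hpq, by linarith⟩, hpq', by linarith⟩)
  refine measure_mono_null (fun ω hω => ?_) (measure_union_null (h.measure_graph g hg.measurable)
    (measure_preimage_countable_eq_zero h.measure_left_eq hg.countable_not_continuousAt))
  by_cases hc : ContinuousAt g (X ω)
  exacts [Or.inl (hgraph _ hω hc), Or.inr hc]

theorem measure_touchSet (h : DiffusePair μ X Z) (S : Set (ℝ × ℝ)) :
    μ {ω | (X ω, Z ω) ∈ touchSet S} = 0 := by
  simp only [touchSet, mem_iUnion, ofPred_exists]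
  refine measure_iUnion_null fun n => ?_
  have hδ : (0 : ℝ) < 1 / (n + 1) := Nat.one_div_pos_of_nat
  refine measure_mono_null (fun ω hω => ?_) (measure_union_null (measure_union_null
    (h.measure_cornerGapPoints hδ S)
    (measure_preimage_countable_eq_zero h.measure_left_eq
      (countable_image_fst_rightGapPoints hδ S)))
    (measure_preimage_countable_eq_zero h.measure_right_eq
      (countable_image_fst_rightGapPoints hδ (Prod.swap ⁻¹' S))))
  rcases hω with (hω | ⟨hω, -⟩) | ⟨-, hω⟩
  exacts [Or.inl (Or.inl hω), Or.inl (Or.inr hω), Or.inr hω]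

end DiffusePair

end Probability

theorem stmt17_general {Ω : Type*} [MeasurableSpace Ω] (μ : Measure Ω) [IsProbabilityMeasure μ]
    (Y : Fin 4 → Ω → ℝ) (hYmeas : ∀ i, Measurable (Y i))
    (hord : ∀ᵐ ω ∂μ, (∀ i, Y i ω ∈ Set.Icc (0 : ℝ) 1) ∧
      Y 0 ω < Y 1 ω ∧ Y 1 ω < Y 2 ω ∧ Y 2 ω < Y 3 ω)
    (hdiff : ∀ i j, i ≠ j → ∀ᵐ x ∂(Measure.map (Y j) μ),
      ∀ r : ℝ, condDistrib (Y i) (Y j) μ x {r} = 0)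
    (K : Set (ℝ × ℝ)) (hKcomp : IsCompact K) :
    MeasurableSet {ω | (K ∩ Set.Icc (Y 0 ω) (Y 1 ω) ×ˢ Set.Icc (Y 2 ω) (Y 3 ω)).Nonempty ∧
        ¬(K ∩ Set.Ioo (Y 0 ω) (Y 1 ω) ×ˢ Set.Ioo (Y 2 ω) (Y 3 ω)).Nonempty} ∧
    μ {ω | (K ∩ Set.Icc (Y 0 ω) (Y 1 ω) ×ˢ Set.Icc (Y 2 ω) (Y 3 ω)).Nonempty ∧
        ¬(K ∩ Set.Ioo (Y 0 ω) (Y 1 ω) ×ˢ Set.Ioo (Y 2 ω) (Y 3 ω)).Nonempty} = 0 := by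
  have hpair (i j : Fin 4) (hij : i ≠ j) : DiffusePair μ (Y i) (Y j) :=
    .of_condDistrib (hYmeas i) (hYmeas j) (hdiff i j hij) (hdiff j i hij.symm)
  refine ⟨((isClosed_setOf_inter_Icc_prod_Icc_nonempty hKcomp).measurableSet.inter
    (isOpen_setOf_inter_Ioo_prod_Ioo_nonempty K).measurableSet.compl).preimage
    ((hYmeas 0).prodMk ((hYmeas 1).prodMk ((hYmeas 2).prodMk (hYmeas 3)))), ?_⟩
  refine measure_mono_null (fun ω ⟨hne, hemp⟩ => ?_) (measure_union_null (ae_iff.1 hord)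
    (measure_union_null ((hpair 0 2 (by decide)).measure_touchSet K)
    (measure_union_null ((hpair 1 2 (by decide)).neg_left.measure_touchSet
      ((fun p => (-p.1, p.2)) ⁻¹' K))
    (measure_union_null ((hpair 0 3 (by decide)).neg_right.measure_touchSet
      ((fun p => (p.1, -p.2)) ⁻¹' K))
    ((hpair 1 3 (by decide)).neg_left.neg_right.measure_touchSet
      ((fun p => (-p.1, -p.2)) ⁻¹' K))))))
  by_cases hω : (∀ i, Y i ω ∈ Set.Icc (0 : ℝ) 1) ∧ Y 0 ω < Y 1 ω ∧ Y 1 ω < Y 2 ω ∧ Y 2 ω < Y 3 ω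
  · exact Or.inr (mem_touchSet_of_boundary hω.2.1 hω.2.2.2 hne hemp)
  · exact Or.inl hω

/-- Let `(Y₁,Y₂,Y₃,Y₄)` be a random vector with values in `[0,1]⁴`,
a.s. strictly increasing, such that for `i ≠ j` the conditional distribution of `Y_i` given
`Y_j` is a.s. nonatomic. Then for every nonempty compact `K ⊆ ▲`, the event that the random
rectangle `R = [Y₁,Y₂] × [Y₃,Y₄]` meets `K` while its interior does not is measurable and has
probability zero: `R` a.s. intersects `K` in its interior or not at all. -/
theorem stmt17 {Ω : Type*} [MeasurableSpace Ω] (μ : Measure Ω) [IsProbabilityMeasure μ]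
    (Y : Fin 4 → Ω → ℝ) (hYmeas : ∀ i, Measurable (Y i))
    (hord : ∀ᵐ ω ∂μ, (∀ i, Y i ω ∈ Set.Icc (0 : ℝ) 1) ∧
      Y 0 ω < Y 1 ω ∧ Y 1 ω < Y 2 ω ∧ Y 2 ω < Y 3 ω)
    (hdiff : ∀ i j, i ≠ j → ∀ᵐ x ∂(Measure.map (Y j) μ),
      ∀ r : ℝ, condDistrib (Y i) (Y j) μ x {r} = 0)
    (K : Set (ℝ × ℝ)) (hKne : K.Nonempty) (hKcomp : IsCompact K) (hKsub : K ⊆ Tri) :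
    MeasurableSet {ω | (K ∩ Set.Icc (Y 0 ω) (Y 1 ω) ×ˢ Set.Icc (Y 2 ω) (Y 3 ω)).Nonempty ∧
        ¬(K ∩ Set.Ioo (Y 0 ω) (Y 1 ω) ×ˢ Set.Ioo (Y 2 ω) (Y 3 ω)).Nonempty} ∧
    μ {ω | (K ∩ Set.Icc (Y 0 ω) (Y 1 ω) ×ˢ Set.Icc (Y 2 ω) (Y 3 ω)).Nonempty ∧
        ¬(K ∩ Set.Ioo (Y 0 ω) (Y 1 ω) ×ˢ Set.Ioo (Y 2 ω) (Y 3 ω)).Nonempty} = 0 :=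
  stmt17_general μ Y hYmeas hord hdiff K hKcomp

end
end
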